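/- arXiv:2305.00541 — 8 statements merged into one kernel-verified Lean document; each statement's English description precedes it below -/
import Mathlib

section
/- For all constants σ₁, σ₂, δ, p₁, p₂ > 0, the quartic polynomial φ̄(θ) := φ₁(θ)φ₂(θ) − p₁p₂ has exactly four real roots, all simple, which satisfy θ₁ < θ₂ < θ₃ = 0 < θ₄; that is, 0 is a root of φ̄, φ̄ has exactly two strictly negative real roots and exactly one strictly positive real root, and all four roots are distinct. -/
/-- The quadratic characteristic polynomial
`φ(θ) = (1/2)σ²θ² + (δ + (1/2)σ²)θ − p` of one regime. -/
noncomputable def phiQuad (σ δ p θ : ℝ) : ℝ :=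
  (1/2) * σ^2 * θ^2 + (δ + (1/2) * σ^2) * θ - p

/-- The quartic polynomial `φ̄(θ) = φ₁(θ)φ₂(θ) − p₁p₂`. -/
noncomputable def phiBar (σ₁ σ₂ δ p₁ p₂ θ : ℝ) : ℝ :=
  phiQuad σ₁ δ p₁ θ * phiQuad σ₂ δ p₂ θ - p₁ * p₂

private lemma L_g0 (a₁ a₂ b₁ b₂ p₁ p₂ : ℝ) (hb₁ : 0 < b₁) (hb₂ : 0 < b₂)
    (hp₁ : 0 < p₁) (hp₂ : 0 < p₂) :
    (a₁*0+b₁)*(a₂*0+b₂)*0 - p₂*(a₁*0+b₁) - p₁*(a₂*0+b₂) < 0 := by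
  nlinarith

private lemma L_gT (a₁ a₂ b₁ b₂ p₁ p₂ T : ℝ) (ha₁ : 0 < a₁) (ha₂ : 0 < a₂)
    (hb₁ : 0 < b₁) (hb₂ : 0 < b₂) (hT0 : 0 < T)
    (h1 : b₁ * T ≥ p₁ + b₁) (h2 : b₂ * T ≥ p₂ + b₂)
    (heq : b₁*b₂*T = b₂*p₁ + b₁*p₂ + b₁*b₂) :
    0 < (a₁*T+b₁)*(a₂*T+b₂)*T - p₂*(a₁*T+b₁) - p₁*(a₂*T+b₂) := by
  have t1 : 0 ≤ a₁*T*(b₂*T - p₂) := by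
    apply mul_nonneg (by positivity); linarith
  have t2 : 0 ≤ a₂*T*(b₁*T - p₁) := by
    apply mul_nonneg (by positivity); linarith
  have t3 : 0 < a₁*a₂*T^3 := by positivity
  have t4 : 0 < b₁*b₂ := by positivity
  nlinarith [t1, t2, t3, t4, heq]

private lemma L_gv (a₁ a₂ b₁ b₂ p₁ p₂ v E B2 : ℝ) (hE : 0 < E) (hB2 : 0 < B2)
    (hp₁ : 0 < p₁) (hp₂ : 0 < p₂)
    (hq1 : a₁*v + b₁ = -E) (hq2 : a₂*v + b₂ = -B2)
    (hvE : E * (-v) ≤ p₁) :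
    0 < (a₁*v+b₁)*(a₂*v+b₂)*v - p₂*(a₁*v+b₁) - p₁*(a₂*v+b₂) := by
  rw [hq1, hq2]
  have h1 : 0 < p₂ * E := by positivity
  have h2 : 0 ≤ B2 * (p₁ - E*(-v)) := mul_nonneg hB2.le (by linarith)
  nlinarith [h1, h2]

private lemma L_gu (a₁ a₂ b₁ b₂ p₁ p₂ u C₁ C₂ : ℝ)
    (hp₁ : 0 < p₁) (hp₂ : 0 < p₂)
    (hq1 : a₁*u + b₁ = -C₁) (hq2 : a₂*u + b₂ = -C₂)
    (hC₁ : p₁ < C₁) (hC₂ : p₂ < C₂) (hu : u < -2) :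
    (a₁*u+b₁)*(a₂*u+b₂)*u - p₂*(a₁*u+b₁) - p₁*(a₂*u+b₂) < 0 := by
  rw [hq1, hq2]
  have hC₁0 : 0 < C₁ := lt_trans hp₁ hC₁
  have hC₂0 : 0 < C₂ := lt_trans hp₂ hC₂
  nlinarith [mul_pos hC₁0 hC₂0, mul_pos hC₁0 (sub_pos.mpr hC₂),
    mul_pos hC₂0 (sub_pos.mpr hC₁)]

set_option maxHeartbeats 1600000 in
/-- Abstract core lemma. -/
lemma quartic_aux (a₁ a₂ b₁ b₂ δ p₁ p₂ : ℝ) (f : ℝ → ℝ)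
    (ha₁ : 0 < a₁) (ha₂ : 0 < a₂) (hδ : 0 < δ) (hp₁ : 0 < p₁) (hp₂ : 0 < p₂)
    (hb₁def : b₁ = δ + a₁) (hb₂def : b₂ = δ + a₂) (haa : a₁ ≤ a₂)
    (hf : ∀ θ, f θ = (a₁*θ^2 + b₁*θ - p₁) * (a₂*θ^2 + b₂*θ - p₂) - p₁*p₂) :
    ∃ θ₁ θ₂ θ₄ : ℝ, θ₁ < θ₂ ∧ θ₂ < 0 ∧ 0 < θ₄ ∧
      {θ : ℝ | f θ = 0} = {θ₁, θ₂, 0, θ₄} ∧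
      ∀ θ ∈ ({θ₁, θ₂, 0, θ₄} : Set ℝ), deriv f θ ≠ 0 := by
  have hb₁ : 0 < b₁ := by rw [hb₁def]; linarith
  have hb₂ : 0 < b₂ := by rw [hb₂def]; linarith
  obtain ⟨g, hgfun⟩ : ∃ g : ℝ → ℝ, g = fun θ =>
      (a₁*θ+b₁)*(a₂*θ+b₂)*θ - p₂*(a₁*θ+b₁) - p₁*(a₂*θ+b₂) := ⟨_, rfl⟩
  have hg : ∀ θ, g θ = (a₁*θ+b₁)*(a₂*θ+b₂)*θ - p₂*(a₁*θ+b₁) - p₁*(a₂*θ+b₂) := by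
    intro θ; rw [hgfun]
  have hphig : ∀ θ, f θ = θ * g θ := by
    intro θ; rw [hf, hg]; ring
  have hgcont : Continuous g := by rw [hgfun]; fun_prop
  -- g(0) < 0
  have hg0 : g 0 < 0 := by
    rw [hg]; exact L_g0 a₁ a₂ b₁ b₂ p₁ p₂ hb₁ hb₂ hp₁ hp₂
  -- positive test point
  obtain ⟨T, hTdef⟩ : ∃ x : ℝ, x = p₁/b₁ + p₂/b₂ + 1 := ⟨_, rfl⟩
  have hT0 : 0 < T := by rw [hTdef]; positivity
  have hgT : 0 < g T := by
    have h1 : b₁ * T ≥ p₁ + b₁ := by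
      rw [hTdef, mul_add, mul_add, mul_div_cancel₀ _ hb₁.ne']
      have : 0 ≤ b₁ * (p₂/b₂) := by positivity
      linarith
    have h2 : b₂ * T ≥ p₂ + b₂ := by
      rw [hTdef, mul_add, mul_add, mul_div_cancel₀ _ hb₂.ne', mul_one]
      have : 0 ≤ b₂ * (p₁/b₁) := by positivity
      linarith
    have heq : b₁*b₂*T = b₂*p₁ + b₁*p₂ + b₁*b₂ := by
      rw [hTdef]; field_simp
    rw [hg]
    exact L_gT a₁ a₂ b₁ b₂ p₁ p₂ T ha₁ ha₂ hb₁ hb₂ hT0 h1 h2 heq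
  -- negative test point v with g v > 0
  obtain ⟨ε, hεdef⟩ : ∃ x : ℝ, x = min 1 (p₁/(2*a₁+δ)) := ⟨_, rfl⟩
  have hε : 0 < ε := by
    rw [hεdef]; exact lt_min one_pos (by positivity)
  have hε1 : ε ≤ 1 := by rw [hεdef]; exact min_le_left _ _
  have hε2 : ε * (2*a₁+δ) ≤ p₁ := by
    have h := min_le_right 1 (p₁/(2*a₁+δ))
    rw [hεdef]
    calc min 1 (p₁/(2*a₁+δ)) * (2*a₁+δ) ≤ (p₁/(2*a₁+δ)) * (2*a₁+δ) :=
          mul_le_mul_of_nonneg_right h (by positivity)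
      _ = p₁ := by field_simp
  obtain ⟨v, hvdef⟩ : ∃ x : ℝ, x = -((a₁ + δ + a₁*ε)/a₁) := ⟨_, rfl⟩
  have hv0 : v < 0 := by
    rw [hvdef]
    have : 0 < (a₁ + δ + a₁*ε)/a₁ := by positivity
    linarith
  have hq1v : a₁*v + b₁ = -(a₁*ε) := by
    rw [hvdef, hb₁def]; field_simp; ring
  obtain ⟨B2, hB2def⟩ : ∃ x : ℝ, x = a₂*ε + δ*(a₂-a₁)/a₁ := ⟨_, rfl⟩
  have hq2v : a₂*v + b₂ = -B2 := by
    rw [hvdef, hb₂def, hB2def]; field_simp; ring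
  have hB2 : 0 < B2 := by
    rw [hB2def]
    have h1 : 0 ≤ δ*(a₂-a₁)/a₁ := by
      apply div_nonneg _ ha₁.le
      have : 0 ≤ a₂ - a₁ := by linarith
      positivity
    have h2 : 0 < a₂*ε := mul_pos ha₂ hε
    linarith
  have hE : 0 < a₁*ε := mul_pos ha₁ hε
  have hvA : a₁*ε * (-v) ≤ p₁ := by
    have hv' : -v = (a₁ + δ + a₁*ε)/a₁ := by rw [hvdef]; ring
    rw [hv']
    have h : a₁*ε * ((a₁ + δ + a₁*ε)/a₁) = ε * (a₁ + δ + a₁*ε) := by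
      field_simp
    rw [h]
    have h2 : ε * (a₁ + δ + a₁*ε) ≤ ε * (2*a₁ + δ) := by
      apply mul_le_mul_of_nonneg_left _ hε.le
      have : a₁*ε ≤ a₁*1 := mul_le_mul_of_nonneg_left hε1 ha₁.le
      linarith
    linarith
  have hgv : 0 < g v := by
    rw [hg]
    exact L_gv a₁ a₂ b₁ b₂ p₁ p₂ v (a₁*ε) B2 hE hB2 hp₁ hp₂ hq1v hq2v hvA
  -- far-left point u with g u < 0
  obtain ⟨K, hKdef⟩ : ∃ x : ℝ, x = 2 + p₁/a₁ + p₂/a₂ := ⟨_, rfl⟩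
  have hK2 : 2 ≤ K := by
    have : 0 ≤ p₁/a₁ + p₂/a₂ := by positivity
    rw [hKdef]; linarith
  have haK1 : p₁ + 2*a₁ ≤ a₁ * K := by
    rw [hKdef, mul_add, mul_add, mul_div_cancel₀ _ ha₁.ne']
    have : 0 ≤ a₁ * (p₂/a₂) := by positivity
    linarith
  have haK2 : p₂ + 2*a₂ ≤ a₂ * K := by
    rw [hKdef, mul_add, mul_add, mul_div_cancel₀ _ ha₂.ne']
    have : 0 ≤ a₂ * (p₁/a₁) := by positivity
    linarith
  obtain ⟨u, hudef⟩ : ∃ x : ℝ, x = v - K := ⟨_, rfl⟩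
  have huv : u < v := by rw [hudef]; linarith
  have hgu : g u < 0 := by
    have hq1u : a₁*u + b₁ = -(a₁*ε + a₁*K) := by
      rw [hudef]
      have h : a₁*(v-K) + b₁ = (a₁*v + b₁) - a₁*K := by ring
      rw [h, hq1v]; ring
    have hq2u : a₂*u + b₂ = -(B2 + a₂*K) := by
      rw [hudef]
      have h : a₂*(v-K) + b₂ = (a₂*v + b₂) - a₂*K := by ring
      rw [h, hq2v]; ring
    have hC₁p : p₁ < a₁*ε + a₁*K := by linarith
    have hC₂p : p₂ < B2 + a₂*K := by linarith
    have hu2 : u < -2 := by rw [hudef]; linarith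
    rw [hg]
    exact L_gu a₁ a₂ b₁ b₂ p₁ p₂ u (a₁*ε + a₁*K) (B2 + a₂*K) hp₁ hp₂
      hq1u hq2u hC₁p hC₂p hu2
  -- IVT: three roots of g
  obtain ⟨θ₁, hθ₁mem, hθ₁⟩ := intermediate_value_Ioo huv.le hgcont.continuousOn ⟨hgu, hgv⟩
  obtain ⟨θ₂, hθ₂mem, hθ₂⟩ := intermediate_value_Ioo' hv0.le hgcont.continuousOn ⟨hg0, hgv⟩
  obtain ⟨θ₄, hθ₄mem, hθ₄⟩ := intermediate_value_Ioo hT0.le hgcont.continuousOn ⟨hg0, hgT⟩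
  obtain ⟨hθ₁u, hθ₁v⟩ := hθ₁mem
  obtain ⟨hθ₂v, hθ₂0⟩ := hθ₂mem
  obtain ⟨hθ₄0, hθ₄T⟩ := hθ₄mem
  have h12 : θ₁ < θ₂ := lt_trans hθ₁v hθ₂v
  have h14 : θ₁ < θ₄ := by linarith
  have h24 : θ₂ < θ₄ := by linarith
  have h10 : θ₁ < 0 := by linarith
  -- Vieta
  obtain ⟨A, hAdef⟩ : ∃ x : ℝ, x = a₁*a₂ := ⟨_, rfl⟩
  obtain ⟨B, hBdef⟩ : ∃ x : ℝ, x = a₁*b₂ + a₂*b₁ := ⟨_, rfl⟩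
  obtain ⟨C, hCdef⟩ : ∃ x : ℝ, x = b₁*b₂ - a₁*p₂ - a₂*p₁ := ⟨_, rfl⟩
  obtain ⟨D, hDdef⟩ : ∃ x : ℝ, x = -(b₁*p₂ + b₂*p₁) := ⟨_, rfl⟩
  have hA : 0 < A := by rw [hAdef]; positivity
  have hD : D < 0 := by
    rw [hDdef]
    have h1 : 0 < b₁*p₂ := mul_pos hb₁ hp₂
    have h2 : 0 < b₂*p₁ := mul_pos hb₂ hp₁
    linarith
  have hgpoly : ∀ θ, g θ = A*θ^3 + B*θ^2 + C*θ + D := by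
    intro θ
    rw [hg, hAdef, hBdef, hCdef, hDdef]; ring
  have hr1 : A*θ₁^3 + B*θ₁^2 + C*θ₁ + D = 0 := by rw [← hgpoly]; exact hθ₁
  have hr2 : A*θ₂^3 + B*θ₂^2 + C*θ₂ + D = 0 := by rw [← hgpoly]; exact hθ₂
  have hr4 : A*θ₄^3 + B*θ₄^2 + C*θ₄ + D = 0 := by rw [← hgpoly]; exact hθ₄
  have e12 : A*(θ₁^2+θ₁*θ₂+θ₂^2) + B*(θ₁+θ₂) + C = 0 := by
    have h : (θ₁ - θ₂) * (A*(θ₁^2+θ₁*θ₂+θ₂^2) + B*(θ₁+θ₂) + C) = 0 := by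
      linear_combination hr1 - hr2
    exact (mul_eq_zero.mp h).resolve_left (sub_ne_zero.mpr h12.ne)
  have e24 : A*(θ₂^2+θ₂*θ₄+θ₄^2) + B*(θ₂+θ₄) + C = 0 := by
    have h : (θ₂ - θ₄) * (A*(θ₂^2+θ₂*θ₄+θ₄^2) + B*(θ₂+θ₄) + C) = 0 := by
      linear_combination hr2 - hr4
    exact (mul_eq_zero.mp h).resolve_left (sub_ne_zero.mpr h24.ne)
  have hB' : B = -(A*(θ₁+θ₂+θ₄)) := by
    have h : (θ₁ - θ₄) * (A*(θ₁+θ₂+θ₄) + B) = 0 := by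
      linear_combination e12 - e24
    have h' := (mul_eq_zero.mp h).resolve_left (sub_ne_zero.mpr h14.ne)
    linarith
  have hC' : C = A*(θ₁*θ₂+θ₁*θ₄+θ₂*θ₄) := by
    linear_combination e12 - (θ₁+θ₂)*hB'
  have hD' : D = -(A*(θ₁*θ₂*θ₄)) := by
    linear_combination hr1 - θ₁^2*hB' - θ₁*hC'
  have hfact : ∀ θ, f θ = A * θ * (θ-θ₁) * (θ-θ₂) * (θ-θ₄) := by
    intro θ
    rw [hphig, hgpoly]
    linear_combination θ^3*hB' + θ^2*hC' + θ*hD'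
  -- derivative
  have hderiv : ∀ x : ℝ, deriv f x = 4*A*x^3 + 3*B*x^2 + 2*C*x + D := by
    intro x
    have hHD : HasDerivAt (fun θ : ℝ => A*θ^4 + B*θ^3 + C*θ^2 + D*θ)
        (4*A*x^3 + 3*B*x^2 + 2*C*x + D) x := by
      have h1 := (hasDerivAt_pow 4 x).const_mul A
      have h2 := (hasDerivAt_pow 3 x).const_mul B
      have h3 := (hasDerivAt_pow 2 x).const_mul C
      have h4 := (hasDerivAt_id x).const_mul D
      have h := ((h1.add h2).add h3).add h4
      exact h.congr_deriv (by norm_num; ring)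
    have hfun : f = fun θ => A*θ^4 + B*θ^3 + C*θ^2 + D*θ := by
      funext θ
      rw [hphig, hgpoly]; ring
    rw [hfun]
    exact hHD.deriv
  refine ⟨θ₁, θ₂, θ₄, h12, hθ₂0, hθ₄0, ?_, ?_⟩
  · ext x
    simp only [Set.mem_setOf_eq, Set.mem_insert_iff, Set.mem_singleton_iff]
    rw [hfact x]
    simp only [mul_eq_zero, sub_eq_zero, hA.ne', false_or]
    tauto
  · intro θ hθ
    simp only [Set.mem_insert_iff, Set.mem_singleton_iff] at hθ
    rcases hθ with h' | h' | h' | h' <;> rw [h', hderiv]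
    · have h : 4*A*θ₁^3 + 3*B*θ₁^2 + 2*C*θ₁ + D = A * θ₁ * (θ₁-θ₂) * (θ₁-θ₄) := by
        linear_combination 3*θ₁^2*hB' + 2*θ₁*hC' + hD'
      rw [h]
      exact mul_ne_zero (mul_ne_zero (mul_ne_zero hA.ne' h10.ne)
        (sub_ne_zero.mpr h12.ne)) (sub_ne_zero.mpr h14.ne)
    · have h : 4*A*θ₂^3 + 3*B*θ₂^2 + 2*C*θ₂ + D = A * θ₂ * (θ₂-θ₁) * (θ₂-θ₄) := by
        linear_combination 3*θ₂^2*hB' + 2*θ₂*hC' + hD'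
      rw [h]
      exact mul_ne_zero (mul_ne_zero (mul_ne_zero hA.ne' hθ₂0.ne)
        (sub_ne_zero.mpr h12.ne')) (sub_ne_zero.mpr h24.ne)
    · rw [show (4*A*(0:ℝ)^3 + 3*B*0^2 + 2*C*0 + D) = D by ring]
      exact hD.ne
    · have h : 4*A*θ₄^3 + 3*B*θ₄^2 + 2*C*θ₄ + D = A * θ₄ * (θ₄-θ₁) * (θ₄-θ₂) := by
        linear_combination 3*θ₄^2*hB' + 2*θ₄*hC' + hD'
      rw [h]
      exact mul_ne_zero (mul_ne_zero (mul_ne_zero hA.ne' hθ₄0.ne')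
        (sub_ne_zero.mpr h14.ne')) (sub_ne_zero.mpr h24.ne')

/-- For all constants `σ₁, σ₂, δ, p₁, p₂ > 0`, the quartic `φ̄ = φ₁φ₂ − p₁p₂` has exactly
four real roots, all simple, satisfying `θ₁ < θ₂ < θ₃ = 0 < θ₄`: its zero set is
`{θ₁, θ₂, 0, θ₄}` with `θ₁ < θ₂ < 0 < θ₄` (so it has exactly two strictly negative roots,
one strictly positive root, `0` is a root, and all four roots are distinct), and the
derivative of `φ̄` does not vanish at any of the roots. -/
theorem phiBar_four_simple_roots (σ₁ σ₂ δ p₁ p₂ : ℝ)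
    (hσ₁ : 0 < σ₁) (hσ₂ : 0 < σ₂) (hδ : 0 < δ) (hp₁ : 0 < p₁) (hp₂ : 0 < p₂) :
    ∃ θ₁ θ₂ θ₄ : ℝ, θ₁ < θ₂ ∧ θ₂ < 0 ∧ 0 < θ₄ ∧
      {θ : ℝ | phiBar σ₁ σ₂ δ p₁ p₂ θ = 0} = {θ₁, θ₂, 0, θ₄} ∧
      ∀ θ ∈ ({θ₁, θ₂, 0, θ₄} : Set ℝ), deriv (phiBar σ₁ σ₂ δ p₁ p₂) θ ≠ 0 := by
  rcases le_total σ₁ σ₂ with hle | hle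
  · refine quartic_aux ((1/2)*σ₁^2) ((1/2)*σ₂^2) (δ + (1/2)*σ₁^2) (δ + (1/2)*σ₂^2)
      δ p₁ p₂ _ (by positivity) (by positivity) hδ hp₁ hp₂ rfl rfl ?_ ?_
    · nlinarith
    · intro θ; simp only [phiBar, phiQuad]
  · have hswap : phiBar σ₁ σ₂ δ p₁ p₂ = phiBar σ₂ σ₁ δ p₂ p₁ := by
      funext θ
      simp only [phiBar, phiQuad]
      ring
    rw [hswap]
    refine quartic_aux ((1/2)*σ₂^2) ((1/2)*σ₁^2) (δ + (1/2)*σ₂^2) (δ + (1/2)*σ₁^2)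
      δ p₂ p₁ _ (by positivity) (by positivity) hδ hp₂ hp₁ rfl rfl ?_ ?_
    · nlinarith
    · intro θ; simp only [phiBar, phiQuad]
end

section
/- Let σ₁, σ₂, δ, p₁, p₂ > 0, and for i = 1,2 let αᵢ⁻ := [−(δ + σᵢ²/2) − √((δ + σᵢ²/2)² + 2σᵢ²pᵢ)]/σᵢ² denote the unique strictly negative root of φᵢ. If θ₁ < θ₂ < 0 are the two strictly negative roots of φ̄(θ) = φ₁(θ)φ₂(θ) − p₁p₂, then θ₁ < min{α₁⁻, α₂⁻} and max{α₁⁻, α₂⁻} < θ₂ < 0; consequently φ₁(θ₁) > 0, φ₂(θ₁) > 0, φ₁(θ₂) < 0, and φ₂(θ₂) < 0. -/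
/-- `α⁻ = [−(δ + σ²/2) − √((δ + σ²/2)² + 2σ²p)]/σ²`, the unique strictly negative root
of `φ`. -/
noncomputable def alphaMinus (σ δ p : ℝ) : ℝ :=
  (-(δ + σ^2/2) - Real.sqrt ((δ + σ^2/2)^2 + 2*σ^2*p)) / σ^2

section Lemmas
set_option linter.unusedSectionVars false
variable {σ δ p : ℝ} (hσ : 0 < σ) (hδ : 0 < δ) (hp : 0 < p)
include hσ hδ hp

lemma sqrt_sq' : (Real.sqrt ((δ + σ^2/2)^2 + 2*σ^2*p))^2 = (δ + σ^2/2)^2 + 2*σ^2*p := by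
  apply Real.sq_sqrt
  positivity

lemma sqrt_pos' : 0 < Real.sqrt ((δ + σ^2/2)^2 + 2*σ^2*p) := by
  apply Real.sqrt_pos.2
  positivity

lemma alpha_key : σ^2 * alphaMinus σ δ p = -(δ + σ^2/2) - Real.sqrt ((δ + σ^2/2)^2 + 2*σ^2*p) := by
  unfold alphaMinus
  field_simp

lemma alpha_neg : alphaMinus σ δ p < 0 := by
  unfold alphaMinus
  apply div_neg_of_neg_of_pos
  · nlinarith [sqrt_pos' hσ hδ hp]
  · positivity

lemma alpha_root : phiQuad σ δ p (alphaMinus σ δ p) = 0 := by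
  have hk := alpha_key hσ hδ hp
  have h2 := sqrt_sq' hσ hδ hp
  set s := Real.sqrt ((δ + σ^2/2)^2 + 2*σ^2*p) with hs
  set a := alphaMinus σ δ p with ha
  have hσ2 : (0:ℝ) < σ^2 := by positivity
  have : 2 * σ^2 * phiQuad σ δ p a = 0 := by
    unfold phiQuad
    linear_combination (σ^2*a + (δ+σ^2/2) - s) * hk + h2
  exact (mul_eq_zero.mp this).resolve_left (by positivity)

/-- If `x < 0` and `φ(x) > 0` then `x` is left of the vertex. -/
lemma lt_vertex {x : ℝ} (hx : x < 0) (hφ : 0 < phiQuad σ δ p x) :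
    σ^2 * x + (δ + σ^2/2) < 0 := by
  unfold phiQuad at hφ
  nlinarith [mul_pos (neg_pos.2 hx) hp]

/-- Strict decrease left of the vertex. -/
lemma phi_anti {s t : ℝ} (hst : s < t) (ht : σ^2 * t + (δ + σ^2/2) < 0) :
    phiQuad σ δ p t < phiQuad σ δ p s := by
  unfold phiQuad
  nlinarith [mul_pos (sub_pos.2 hst) (sub_pos.2 hst)]

/-- `φ(x) < 0` implies `α⁻ < x`. -/
lemma alpha_lt {x : ℝ} (hφ : phiQuad σ δ p x < 0) : alphaMinus σ δ p < x := by
  by_contra h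
  push_neg at h
  have hk := alpha_key hσ hδ hp
  have hr := alpha_root hσ hδ hp
  have hspos := sqrt_pos' hσ hδ hp
  set s := Real.sqrt ((δ + σ^2/2)^2 + 2*σ^2*p) with hs
  set a := alphaMinus σ δ p with ha
  have hid : phiQuad σ δ p x = (σ^2/2)*(x-a)^2 - s*(x-a) := by
    unfold phiQuad at hr ⊢
    nlinarith [hk, hr]
  nlinarith [hid, sq_nonneg (x - a), mul_nonneg (le_of_lt hspos) (sub_nonneg.2 h)]

/-- `x < 0` and `φ(x) > 0` implies `x < α⁻`. -/
lemma lt_alpha {x : ℝ} (hx : x < 0) (hφ : 0 < phiQuad σ δ p x) : x < alphaMinus σ δ p := by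
  by_contra h
  push_neg at h
  have hk := alpha_key hσ hδ hp
  have hr := alpha_root hσ hδ hp
  have hspos := sqrt_pos' hσ hδ hp
  have h2 := sqrt_sq' hσ hδ hp
  set s := Real.sqrt ((δ + σ^2/2)^2 + 2*σ^2*p) with hs
  set a := alphaMinus σ δ p with ha
  have hσ2 : (0:ℝ) < σ^2 := by positivity
  have hid : phiQuad σ δ p x = (σ^2/2)*(x-a)^2 - s*(x-a) := by
    unfold phiQuad at hr ⊢
    nlinarith [hk, hr]
  have hEs : δ + σ^2/2 < s := by nlinarith [h2, hspos, hσ2]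
  have hd1 : σ^2 * (x - a) < δ + σ^2/2 + s := by nlinarith [hk]
  have hd2 : σ^2 * (x - a) < 2*s := by linarith
  have hd0 : 0 ≤ x - a := sub_nonneg.2 h
  nlinarith [hid, mul_nonneg hd0 (le_of_lt (sub_pos.2 hd2))]

lemma phi_big_neg {x : ℝ} (hx : σ^2 * x ≤ -(3*σ^2 + 2*δ + 2*p)) : p < phiQuad σ δ p x := by
  have hσ2 : (0:ℝ) < σ^2 := by positivity
  have h1 : 3*σ^2 + 2*δ + 2*p ≤ -(σ^2*x) := by linarith
  have h2 : 2*σ^2 + 2*p ≤ -(σ^2*x + 2*δ + σ^2) := by linarith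
  have hprod : (3*σ^2 + 2*δ + 2*p) * (2*σ^2 + 2*p) ≤ (σ^2*x) * (σ^2*x + 2*δ + σ^2) := by
    nlinarith [h1, h2]
  unfold phiQuad
  nlinarith [hprod, hσ2, mul_pos hσ2 hp, mul_pos hσ2 hδ, mul_pos hp hδ, sq_nonneg σ,
    mul_pos hσ2 hσ2]

lemma phi_big_pos {x : ℝ} (h3 : 3 ≤ x) (hx : 2*p ≤ σ^2 * x) : p < phiQuad σ δ p x := by
  have hσ2 : (0:ℝ) < σ^2 := by positivity
  unfold phiQuad
  nlinarith [mul_pos hσ2 hp, mul_pos hδ (lt_of_lt_of_le (by norm_num : (0:ℝ) < 3) h3)]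

lemma phi_small_pos {x : ℝ} (hx0 : 0 < x) (hx1 : x ≤ 1) (hx2 : 2*(σ^2 + δ) * x ≤ p) :
    -p < phiQuad σ δ p x ∧ phiQuad σ δ p x < 0 := by
  have hσ2 : (0:ℝ) < σ^2 := by positivity
  constructor
  · unfold phiQuad; nlinarith [mul_pos hσ2 hx0, mul_pos hδ hx0, sq_nonneg x]
  · unfold phiQuad
    have hxx : x^2 ≤ x := by nlinarith
    nlinarith [mul_pos hσ2 hx0, mul_pos hδ hx0]

end Lemmas

open Polynomial in
lemma five_roots_false {σ₁ σ₂ δ p₁ p₂ : ℝ} (hσ₁ : 0 < σ₁) (hσ₂ : 0 < σ₂)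
    {a b c d e : ℝ} (hab : a < b) (hbc : b < c) (hcd : c < d) (hde : d < e)
    (ha : phiBar σ₁ σ₂ δ p₁ p₂ a = 0) (hb : phiBar σ₁ σ₂ δ p₁ p₂ b = 0)
    (hc : phiBar σ₁ σ₂ δ p₁ p₂ c = 0) (hd : phiBar σ₁ σ₂ δ p₁ p₂ d = 0)
    (he : phiBar σ₁ σ₂ δ p₁ p₂ e = 0) : False := by
  set P : ℝ[X] :=
    (C ((1:ℝ)/2*σ₁^2) * X^2 + C (δ + 1/2*σ₁^2) * X - C p₁) *
    (C ((1:ℝ)/2*σ₂^2) * X^2 + C (δ + 1/2*σ₂^2) * X - C p₂) - C (p₁*p₂) with hP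
  have heval : ∀ x : ℝ, P.eval x = phiBar σ₁ σ₂ δ p₁ p₂ x := by
    intro x
    simp [hP, phiBar, phiQuad]
  have hdeg : P.natDegree = 4 := by
    rw [hP]
    compute_degree!
    exact ⟨ne_of_gt hσ₁, ne_of_gt hσ₂⟩
  have hP0 : P ≠ 0 := fun h => by simp [h] at hdeg
  have hmem : ∀ x : ℝ, phiBar σ₁ σ₂ δ p₁ p₂ x = 0 → x ∈ P.roots.toFinset := by
    intro x hx
    rw [Multiset.mem_toFinset, mem_roots hP0]
    exact (heval x).trans hx
  have hsub : ({a, b, c, d, e} : Finset ℝ) ⊆ P.roots.toFinset := by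
    intro x hx
    simp only [Finset.mem_insert, Finset.mem_singleton] at hx
    rcases hx with rfl|rfl|rfl|rfl|rfl
    exacts [hmem _ ha, hmem _ hb, hmem _ hc, hmem _ hd, hmem _ he]
  have hcard : ({a, b, c, d, e} : Finset ℝ).card = 5 := by
    rw [Finset.card_insert_of_notMem (by
        simp only [Finset.mem_insert, Finset.mem_singleton]
        push_neg
        exact ⟨by linarith, by linarith, by linarith, by linarith⟩),
      Finset.card_insert_of_notMem (by
        simp only [Finset.mem_insert, Finset.mem_singleton]
        push_neg
        exact ⟨by linarith, by linarith, by linarith⟩),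
      Finset.card_insert_of_notMem (by
        simp only [Finset.mem_insert, Finset.mem_singleton]
        push_neg
        exact ⟨by linarith, by linarith⟩),
      Finset.card_insert_of_notMem (by
        simp only [Finset.mem_singleton]
        exact by linarith),
      Finset.card_singleton]
  have h5 : 5 ≤ P.roots.toFinset.card := hcard ▸ Finset.card_le_card hsub
  have h4 : P.roots.toFinset.card ≤ 4 :=
    le_trans (Multiset.toFinset_card_le _) (le_trans (P.card_roots') (by rw [hdeg]))
  omega

/-- If `θ₁ < θ₂ < 0` are the two strictly negative roots of `φ̄ = φ₁φ₂ − p₁p₂`, then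
`θ₁ < min{α₁⁻, α₂⁻}` and `max{α₁⁻, α₂⁻} < θ₂ < 0`; consequently
`φ₁(θ₁) > 0`, `φ₂(θ₁) > 0`, `φ₁(θ₂) < 0` and `φ₂(θ₂) < 0`. -/
theorem negative_roots_interlacing (σ₁ σ₂ δ p₁ p₂ θ₁ θ₂ : ℝ)
    (hσ₁ : 0 < σ₁) (hσ₂ : 0 < σ₂) (hδ : 0 < δ) (hp₁ : 0 < p₁) (hp₂ : 0 < p₂)
    (hord : θ₁ < θ₂) (hθ₂neg : θ₂ < 0)
    (hroot₁ : phiBar σ₁ σ₂ δ p₁ p₂ θ₁ = 0) (hroot₂ : phiBar σ₁ σ₂ δ p₁ p₂ θ₂ = 0) :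
    θ₁ < min (alphaMinus σ₁ δ p₁) (alphaMinus σ₂ δ p₂) ∧
    max (alphaMinus σ₁ δ p₁) (alphaMinus σ₂ δ p₂) < θ₂ ∧ θ₂ < 0 ∧
    0 < phiQuad σ₁ δ p₁ θ₁ ∧ 0 < phiQuad σ₂ δ p₂ θ₁ ∧
    phiQuad σ₁ δ p₁ θ₂ < 0 ∧ phiQuad σ₂ δ p₂ θ₂ < 0 := by
  have hθ₁neg : θ₁ < 0 := hord.trans hθ₂neg
  have hprod₁ : phiQuad σ₁ δ p₁ θ₁ * phiQuad σ₂ δ p₂ θ₁ = p₁ * p₂ := by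
    have := hroot₁; unfold phiBar at this; linarith
  have hprod₂ : phiQuad σ₁ δ p₁ θ₂ * phiQuad σ₂ δ p₂ θ₂ = p₁ * p₂ := by
    have := hroot₂; unfold phiBar at this; linarith
  -- signs at θ₂ : both negative
  have hsign₂ : phiQuad σ₁ δ p₁ θ₂ < 0 ∧ phiQuad σ₂ δ p₂ θ₂ < 0 := by
    have hpos : 0 < phiQuad σ₁ δ p₁ θ₂ * phiQuad σ₂ δ p₂ θ₂ := by
      rw [hprod₂]; exact mul_pos hp₁ hp₂
    rcases mul_pos_iff.1 hpos with ⟨h1, h2⟩ | hneg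
    · exfalso
      have hv₁ := lt_vertex hσ₁ hδ hp₁ hθ₂neg h1
      have hv₂ := lt_vertex hσ₂ hδ hp₂ hθ₂neg h2
      have hm₁ := phi_anti hσ₁ hδ hp₁ hord hv₁
      have hm₂ := phi_anti hσ₂ hδ hp₂ hord hv₂
      nlinarith [hprod₁, hprod₂, h1, h2, hm₁, hm₂]
    · exact hneg
  have hα₁θ₂ : alphaMinus σ₁ δ p₁ < θ₂ := alpha_lt hσ₁ hδ hp₁ hsign₂.1
  have hα₂θ₂ : alphaMinus σ₂ δ p₂ < θ₂ := alpha_lt hσ₂ hδ hp₂ hsign₂.2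
  -- signs at θ₁ : both positive
  have hsign₁ : 0 < phiQuad σ₁ δ p₁ θ₁ ∧ 0 < phiQuad σ₂ δ p₂ θ₁ := by
    have hpos : 0 < phiQuad σ₁ δ p₁ θ₁ * phiQuad σ₂ δ p₂ θ₁ := by
      rw [hprod₁]; exact mul_pos hp₁ hp₂
    rcases mul_pos_iff.1 hpos with hpos' | ⟨h1, h2⟩
    · exact hpos'
    · exfalso
      -- heavy case: θ₁ strictly between the αᵢ⁻ and 0, build five distinct roots
      have hα₁θ₁ : alphaMinus σ₁ δ p₁ < θ₁ := alpha_lt hσ₁ hδ hp₁ h1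
      have hα₂θ₁ : alphaMinus σ₂ δ p₂ < θ₁ := alpha_lt hσ₂ hδ hp₂ h2
      set A := max (alphaMinus σ₁ δ p₁) (alphaMinus σ₂ δ p₂) with hA
      have hAθ₁ : A < θ₁ := max_lt hα₁θ₁ hα₂θ₁
      have hσ₁2 : (0:ℝ) < σ₁^2 := by positivity
      have hσ₂2 : (0:ℝ) < σ₂^2 := by positivity
      have hne₁ : σ₁^2 ≠ 0 := ne_of_gt hσ₁2
      have hne₂ : σ₂^2 ≠ 0 := ne_of_gt hσ₂2
      have hfA : phiBar σ₁ σ₂ δ p₁ p₂ A < 0 := by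
        rcases max_cases (alphaMinus σ₁ δ p₁) (alphaMinus σ₂ δ p₂) with ⟨h, _⟩ | ⟨h, _⟩ <;>
          rw [hA, h] <;> unfold phiBar
        · rw [alpha_root hσ₁ hδ hp₁]
          nlinarith [mul_pos hp₁ hp₂]
        · rw [alpha_root hσ₂ hδ hp₂]
          nlinarith [mul_pos hp₁ hp₂]
      have e11 : σ₁^2 * (2*δ/σ₁^2) = 2*δ := by field_simp
      have e12 : σ₁^2 * (2*p₁/σ₁^2) = 2*p₁ := by field_simp
      have e13 : (0:ℝ) ≤ σ₁^2 * (2*δ/σ₂^2) := by positivity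
      have e14 : (0:ℝ) ≤ σ₁^2 * (2*p₂/σ₂^2) := by positivity
      have e21 : σ₂^2 * (2*δ/σ₂^2) = 2*δ := by field_simp
      have e22 : σ₂^2 * (2*p₂/σ₂^2) = 2*p₂ := by field_simp
      have e23 : (0:ℝ) ≤ σ₂^2 * (2*δ/σ₁^2) := by positivity
      have e24 : (0:ℝ) ≤ σ₂^2 * (2*p₁/σ₁^2) := by positivity
      -- far negative point T
      obtain ⟨T, hT1, hT2, hTneg⟩ :
          ∃ T : ℝ, σ₁^2 * T ≤ -(3*σ₁^2 + 2*δ + 2*p₁) ∧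
            σ₂^2 * T ≤ -(3*σ₂^2 + 2*δ + 2*p₂) ∧ T < 0 := by
        refine ⟨-(3 + 2*δ/σ₁^2 + 2*δ/σ₂^2 + 2*p₁/σ₁^2 + 2*p₂/σ₂^2), ?_, ?_, ?_⟩
        · linarith [e11, e12, e13, e14]
        · linarith [e21, e22, e23, e24]
        · have : 0 < 3 + 2*δ/σ₁^2 + 2*δ/σ₂^2 + 2*p₁/σ₁^2 + 2*p₂/σ₂^2 := by positivity
          linarith
      have hφ₁T := phi_big_neg hσ₁ hδ hp₁ hT1
      have hφ₂T := phi_big_neg hσ₂ hδ hp₂ hT2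
      have hfT : 0 < phiBar σ₁ σ₂ δ p₁ p₂ T := by
        have h := mul_lt_mul'' hφ₁T hφ₂T (le_of_lt hp₁) (le_of_lt hp₂)
        unfold phiBar
        linarith
      have hTA : T < A := lt_of_lt_of_le
        (lt_alpha hσ₁ hδ hp₁ hTneg (hp₁.trans hφ₁T)) (le_max_left _ _)
      have cont : Continuous (phiBar σ₁ σ₂ δ p₁ p₂) := by
        unfold phiBar phiQuad
        fun_prop
      -- root r₀ in (T, A)
      obtain ⟨r₀, hr₀mem, hr₀⟩ :=
        intermediate_value_Ioo' (le_of_lt hTA) cont.continuousOn ⟨hfA, hfT⟩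
      -- small positive point b
      obtain ⟨b, hb0, hb1, hbp₁, hbp₂⟩ :
          ∃ b : ℝ, 0 < b ∧ b ≤ 1 ∧ 2*(σ₁^2 + δ) * b ≤ p₁ ∧ 2*(σ₂^2 + δ) * b ≤ p₂ := by
        refine ⟨min 1 (min (p₁/(2*(σ₁^2+δ))) (p₂/(2*(σ₂^2+δ)))), ?_, min_le_left _ _, ?_, ?_⟩
        · exact lt_min one_pos (lt_min (by positivity) (by positivity))
        · have h := le_trans (min_le_right (1:ℝ) _) (min_le_left (p₁/(2*(σ₁^2+δ))) (p₂/(2*(σ₂^2+δ))))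
          rw [mul_comm]
          exact (le_div_iff₀ (by positivity)).1 h
        · have h := le_trans (min_le_right (1:ℝ) _) (min_le_right (p₁/(2*(σ₁^2+δ))) (p₂/(2*(σ₂^2+δ))))
          rw [mul_comm]
          exact (le_div_iff₀ (by positivity)).1 h
      obtain ⟨hb₁l, hb₁r⟩ := phi_small_pos hσ₁ hδ hp₁ hb0 hb1 hbp₁
      obtain ⟨hb₂l, hb₂r⟩ := phi_small_pos hσ₂ hδ hp₂ hb0 hb1 hbp₂
      have hfb : phiBar σ₁ σ₂ δ p₁ p₂ b < 0 := by
        have h := mul_lt_mul'' (neg_lt_neg hb₁l) (neg_lt_neg hb₂l)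
          (le_of_lt (neg_pos.2 hb₁r)) (le_of_lt (neg_pos.2 hb₂r))
        rw [neg_neg, neg_neg] at h
        have h2 : phiQuad σ₁ δ p₁ b * phiQuad σ₂ δ p₂ b =
            (-phiQuad σ₁ δ p₁ b) * (-phiQuad σ₂ δ p₂ b) := by ring
        unfold phiBar
        rw [h2]
        linarith
      -- far positive point R
      obtain ⟨R, hR3, hR1, hR2⟩ :
          ∃ R : ℝ, (3:ℝ) ≤ R ∧ 2*p₁ ≤ σ₁^2 * R ∧ 2*p₂ ≤ σ₂^2 * R := by
        refine ⟨3 + 2*p₁/σ₁^2 + 2*p₂/σ₂^2, ?_, ?_, ?_⟩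
        · have : (0:ℝ) ≤ 2*p₁/σ₁^2 + 2*p₂/σ₂^2 := by positivity
          linarith
        · linarith [e12, e14, hσ₁2]
        · linarith [e22, e24, hσ₂2]
      have hφ₁R := phi_big_pos hσ₁ hδ hp₁ hR3 hR1
      have hφ₂R := phi_big_pos hσ₂ hδ hp₂ hR3 hR2
      have hfR : 0 < phiBar σ₁ σ₂ δ p₁ p₂ R := by
        have h := mul_lt_mul'' hφ₁R hφ₂R (le_of_lt hp₁) (le_of_lt hp₂)
        unfold phiBar
        linarith
      have hbR : b ≤ R := le_trans hb1 (by linarith)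
      obtain ⟨r₄, hr₄mem, hr₄⟩ :=
        intermediate_value_Ioo hbR cont.continuousOn ⟨hfb, hfR⟩
      have hf0 : phiBar σ₁ σ₂ δ p₁ p₂ 0 = 0 := by
        unfold phiBar phiQuad
        ring
      exact five_roots_false hσ₁ hσ₂ (hr₀mem.2.trans hAθ₁) hord hθ₂neg
        (hb0.trans hr₄mem.1) hr₀ hroot₁ hroot₂ hf0 hr₄
  refine ⟨lt_min (lt_alpha hσ₁ hδ hp₁ hθ₁neg hsign₁.1) (lt_alpha hσ₂ hδ hp₂ hθ₁neg hsign₁.2),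
    max_lt hα₁θ₂ hα₂θ₂, hθ₂neg, hsign₁.1, hsign₁.2, hsign₂.1, hsign₂.2⟩
end

section
/- Let σ₁, δ, p₁ > 0 and let α₂ < 0 < α₁ be the two real roots of φ₁(α) = (1/2)σ₁²α² + (δ + (1/2)σ₁²)α − p₁. Let θ₁, θ₂ < 0 be real numbers with φ₁(θ₁) > 0 and φ₁(θ₂) < 0, and let b₁ ≤ b₂ be real numbers. Then D := e^{α₁b₂+α₂b₁}[θ₁φ₁(θ₂) − θ₂φ₁(θ₁) + α₁(φ₁(θ₁) − φ₁(θ₂))] + e^{α₁b₁+α₂b₂}[θ₂φ₁(θ₁) − θ₁φ₁(θ₂) + α₂(φ₁(θ₂) − φ₁(θ₁))] > 0. -/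
/-- Positivity of the common denominator `D` of the coefficients of the stationary
distribution: if `α₂ < 0 < α₁` are the roots of `φ₁`, `θ₁, θ₂ < 0` with `φ₁(θ₁) > 0`
and `φ₁(θ₂) < 0`, and `b₁ ≤ b₂`, then
`D = e^{α₁b₂+α₂b₁}[θ₁φ₁(θ₂) − θ₂φ₁(θ₁) + α₁(φ₁(θ₁) − φ₁(θ₂))]
   + e^{α₁b₁+α₂b₂}[θ₂φ₁(θ₁) − θ₁φ₁(θ₂) + α₂(φ₁(θ₂) − φ₁(θ₁))] > 0`. -/
theorem denominator_positive (σ₁ δ p₁ α₁ α₂ θ₁ θ₂ b₁ b₂ : ℝ)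
    (hσ₁ : 0 < σ₁) (hδ : 0 < δ) (hp₁ : 0 < p₁)
    (hα₂ : α₂ < 0) (hα₁ : 0 < α₁)
    (hrootα₁ : phiQuad σ₁ δ p₁ α₁ = 0) (hrootα₂ : phiQuad σ₁ δ p₁ α₂ = 0)
    (hθ₁ : θ₁ < 0) (hθ₂ : θ₂ < 0)
    (hφθ₁ : 0 < phiQuad σ₁ δ p₁ θ₁) (hφθ₂ : phiQuad σ₁ δ p₁ θ₂ < 0)
    (hb : b₁ ≤ b₂) :
    0 < Real.exp (α₁ * b₂ + α₂ * b₁) *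
          (θ₁ * phiQuad σ₁ δ p₁ θ₂ - θ₂ * phiQuad σ₁ δ p₁ θ₁ +
            α₁ * (phiQuad σ₁ δ p₁ θ₁ - phiQuad σ₁ δ p₁ θ₂)) +
        Real.exp (α₁ * b₁ + α₂ * b₂) *
          (θ₂ * phiQuad σ₁ δ p₁ θ₁ - θ₁ * phiQuad σ₁ δ p₁ θ₂ +
            α₂ * (phiQuad σ₁ δ p₁ θ₂ - phiQuad σ₁ δ p₁ θ₁)) := by
  set x := phiQuad σ₁ δ p₁ θ₁ with hx
  set y := phiQuad σ₁ δ p₁ θ₂ with hy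
  have hE : Real.exp (α₁ * b₁ + α₂ * b₂) ≤ Real.exp (α₁ * b₂ + α₂ * b₁) := by
    apply Real.exp_le_exp.2; nlinarith
  have hEpos : 0 < Real.exp (α₁ * b₁ + α₂ * b₂) := Real.exp_pos _
  have hK : 0 < θ₁ * y - θ₂ * x + α₁ * (x - y) := by nlinarith
  nlinarith [mul_le_mul_of_nonneg_right hE hK.le,
    mul_pos hEpos (show 0 < (α₁ - α₂) * (x - y) by nlinarith)]
end

section
/- Let p₁ > 0, let α₂ < 0 < α₁ and θ₁ < 0 be real numbers with θ₁ < α₂, let P > 0 be a real number, and let b₁ ≤ b₂ be real numbers. Then B̂₂ := −e^{α₁b₂+α₂b₁}[(α₁ − θ₁)p₁ + α₁P] + e^{α₁b₁+α₂b₂}[(α₂ − θ₁)p₁ + α₂P] < 0. -/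
/-- Negativity of the numerator `B̂₂` of the coefficient `B₂` of the stationary CDF:
for `p₁ > 0`, `α₂ < 0 < α₁`, `θ₁ < 0` with `θ₁ < α₂`, `P > 0`, and `b₁ ≤ b₂`, one has
`B̂₂ = −e^{α₁b₂+α₂b₁}[(α₁ − θ₁)p₁ + α₁P] + e^{α₁b₁+α₂b₂}[(α₂ − θ₁)p₁ + α₂P] < 0`. -/
theorem B2hat_negative (p₁ α₁ α₂ θ₁ P b₁ b₂ : ℝ)
    (hp₁ : 0 < p₁) (hα₂ : α₂ < 0) (hα₁ : 0 < α₁)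
    (hθ₁ : θ₁ < 0) (hθ₁α₂ : θ₁ < α₂) (hP : 0 < P) (hb : b₁ ≤ b₂) :
    -Real.exp (α₁ * b₂ + α₂ * b₁) * ((α₁ - θ₁) * p₁ + α₁ * P) +
      Real.exp (α₁ * b₁ + α₂ * b₂) * ((α₂ - θ₁) * p₁ + α₂ * P) < 0 := by
  set E₁ := Real.exp (α₁ * b₂ + α₂ * b₁) with hE₁
  set E₂ := Real.exp (α₁ * b₁ + α₂ * b₂) with hE₂
  have hE₁pos : 0 < E₁ := Real.exp_pos _
  have hE₂pos : 0 < E₂ := Real.exp_pos _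
  have hA : 0 < (α₁ - θ₁) * p₁ + α₁ * P := by nlinarith
  have hBA : (α₂ - θ₁) * p₁ + α₂ * P < (α₁ - θ₁) * p₁ + α₁ * P := by nlinarith
  have hE : E₂ ≤ E₁ := by
    apply Real.exp_le_exp.2
    nlinarith
  rcases le_or_gt ((α₂ - θ₁) * p₁ + α₂ * P) 0 with hB | hB
  · nlinarith
  · nlinarith [mul_lt_mul hBA hE hE₂pos hA.le]
end

section
/- Let σ₁, δ, p₁, p₂ > 0, let α₂ < 0 < α₁ be the roots of φ₁, let θ₁, θ₂, b₁, b₂ be real numbers, set π₁ := p₂/(p₁+p₂), π₂ := p₁/(p₁+p₂), φ₁ᵢ := φ₁(θᵢ)/p₂ for i = 1,2, and suppose D ≠ 0, where D, Â₁, B̂₁, B̂₂ are defined by D := e^{α₁b₂+α₂b₁}[θ₁φ₁(θ₂) − θ₂φ₁(θ₁) + α₁(φ₁(θ₁) − φ₁(θ₂))] + e^{α₁b₁+α₂b₂}[θ₂φ₁(θ₁) − θ₁φ₁(θ₂) + α₂(φ₁(θ₂) − φ₁(θ₁))], Â₁ := e^{(α₁+α₂)b₁}[(θ₁−θ₂)p₁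 − θ₂φ₁(θ₁) + θ₁φ₁(θ₂)], B̂₁ := e^{α₁b₂+α₂b₁}[(α₁−θ₂)p₁ + α₁φ₁(θ₂)] − e^{α₁b₁+α₂b₂}[(α₂−θ₂)p₁ + α₂φ₁(θ₂)], B̂₂ := −e^{α₁b₂+α₂b₁}[(α₁−θ₁)p₁ + α₁φ₁(θ₁)] + e^{α₁b₁+α₂b₂}[(α₂−θ₁)p₁ + α₂φ₁(θ₁)]. Then A₁ := p₂Â₁/((p₁+p₂)D), A₂ := −A₁, B₁ := p₂B̂₁/((p₁+p₂)D), B₂ := p₂B̂₂/((p₁+p₂)D) satisfy the four linear equations: A₁ + A₂ = 0; A₁e^{α₁(b₂−b₁)} + A₂e^{α₂(b₂−b₁)} − B₁ − B₂ = π₁; α₁A₁e^{α₁(b₂−b₁)} + α₂A₂e^{α₂(b₂−b₁)} − θ₁B₁ − θ₂B₂ = 0; φ₁₁B₁ + φ₁₂B₂ = π₂. -/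
/-- The explicit coefficients `A₁ = p₂Â₁/((p₁+p₂)D)`, `A₂ = −A₁`,
`B₁ = p₂B̂₁/((p₁+p₂)D)`, `B₂ = p₂B̂₂/((p₁+p₂)D)` solve the four linear
continuity/smooth-pasting equations of the stationary CDF. -/
theorem explicit_coefficients_solve_system (σ₁ δ p₁ p₂ α₁ α₂ θ₁ θ₂ b₁ b₂ : ℝ)
    (hσ₁ : 0 < σ₁) (hδ : 0 < δ) (hp₁ : 0 < p₁) (hp₂ : 0 < p₂)
    (hα₂ : α₂ < 0) (hα₁ : 0 < α₁)
    (hrootα₁ : phiQuad σ₁ δ p₁ α₁ = 0) (hrootα₂ : phiQuad σ₁ δ p₁ α₂ = 0)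
    (π₁ π₂ φ₁₁ φ₁₂ D Ah B1h B2h A₁ A₂ B₁ B₂ : ℝ)
    (hπ₁ : π₁ = p₂ / (p₁ + p₂)) (hπ₂ : π₂ = p₁ / (p₁ + p₂))
    (hφ₁₁ : φ₁₁ = phiQuad σ₁ δ p₁ θ₁ / p₂) (hφ₁₂ : φ₁₂ = phiQuad σ₁ δ p₁ θ₂ / p₂)
    (hD : D = Real.exp (α₁ * b₂ + α₂ * b₁) *
            (θ₁ * phiQuad σ₁ δ p₁ θ₂ - θ₂ * phiQuad σ₁ δ p₁ θ₁ +
              α₁ * (phiQuad σ₁ δ p₁ θ₁ - phiQuad σ₁ δ p₁ θ₂)) +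
          Real.exp (α₁ * b₁ + α₂ * b₂) *
            (θ₂ * phiQuad σ₁ δ p₁ θ₁ - θ₁ * phiQuad σ₁ δ p₁ θ₂ +
              α₂ * (phiQuad σ₁ δ p₁ θ₂ - phiQuad σ₁ δ p₁ θ₁)))
    (hDne : D ≠ 0)
    (hAh : Ah = Real.exp ((α₁ + α₂) * b₁) *
            ((θ₁ - θ₂) * p₁ - θ₂ * phiQuad σ₁ δ p₁ θ₁ + θ₁ * phiQuad σ₁ δ p₁ θ₂))
    (hB1h : B1h = Real.exp (α₁ * b₂ + α₂ * b₁) * ((α₁ - θ₂) * p₁ + α₁ * phiQuad σ₁ δ p₁ θ₂) -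
            Real.exp (α₁ * b₁ + α₂ * b₂) * ((α₂ - θ₂) * p₁ + α₂ * phiQuad σ₁ δ p₁ θ₂))
    (hB2h : B2h = -Real.exp (α₁ * b₂ + α₂ * b₁) * ((α₁ - θ₁) * p₁ + α₁ * phiQuad σ₁ δ p₁ θ₁) +
            Real.exp (α₁ * b₁ + α₂ * b₂) * ((α₂ - θ₁) * p₁ + α₂ * phiQuad σ₁ δ p₁ θ₁))
    (hA₁ : A₁ = p₂ * Ah / ((p₁ + p₂) * D)) (hA₂ : A₂ = -A₁)
    (hB₁ : B₁ = p₂ * B1h / ((p₁ + p₂) * D)) (hB₂ : B₂ = p₂ * B2h / ((p₁ + p₂) * D)) :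
    A₁ + A₂ = 0 ∧
    A₁ * Real.exp (α₁ * (b₂ - b₁)) + A₂ * Real.exp (α₂ * (b₂ - b₁)) - B₁ - B₂ = π₁ ∧
    α₁ * A₁ * Real.exp (α₁ * (b₂ - b₁)) + α₂ * A₂ * Real.exp (α₂ * (b₂ - b₁)) -
      θ₁ * B₁ - θ₂ * B₂ = 0 ∧
    φ₁₁ * B₁ + φ₁₂ * B₂ = π₂ := by
  subst hπ₁ hπ₂ hφ₁₁ hφ₁₂ hA₂ hA₁ hB₁ hB₂
  rw [show α₁ * (b₂ - b₁) = α₁ * b₂ - α₁ * b₁ by ring,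
      show α₂ * (b₂ - b₁) = α₂ * b₂ - α₂ * b₁ by ring,
      Real.exp_sub, Real.exp_sub]
  rw [show (α₁ + α₂) * b₁ = α₁ * b₁ + α₂ * b₁ by ring, Real.exp_add] at hAh
  rw [Real.exp_add, Real.exp_add] at hB1h hB2h hD
  have hs : p₁ + p₂ ≠ 0 := by positivity
  have hp2 : p₂ ≠ 0 := ne_of_gt hp₂
  set x := Real.exp (α₁ * b₁) with hxdef
  set y := Real.exp (α₁ * b₂) with hydef
  set u := Real.exp (α₂ * b₁) with hudef
  set v := Real.exp (α₂ * b₂) with hvdef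
  have hx : x ≠ 0 := Real.exp_ne_zero _
  have hu : u ≠ 0 := Real.exp_ne_zero _
  set f1 := phiQuad σ₁ δ p₁ θ₁ with hf1
  set f2 := phiQuad σ₁ δ p₁ θ₂ with hf2
  set K := (θ₁ - θ₂) * p₁ - θ₂ * f1 + θ₁ * f2 with hK
  have e1 : Ah * (y / x) = y * u * K := by rw [hAh]; field_simp
  have e2 : Ah * (v / u) = x * v * K := by rw [hAh]; field_simp
  have key2 : y * u * K - x * v * K - B1h - B2h = D := by
    rw [hB1h, hB2h, hD, hK]; ring
  have key3 : α₁ * (y * u * K) - α₂ * (x * v * K) - θ₁ * B1h - θ₂ * B2h = 0 := by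
    rw [hB1h, hB2h, hK]; ring
  have key4 : f1 * B1h + f2 * B2h = p₁ * D := by
    rw [hB1h, hB2h, hD]; ring
  refine ⟨by ring, ?_, ?_, ?_⟩
  · trans (p₂ * (Ah * (y / x) - Ah * (v / u) - B1h - B2h) / ((p₁ + p₂) * D))
    · ring
    · rw [e1, e2, key2]; field_simp
  · trans (p₂ * (α₁ * (Ah * (y / x)) - α₂ * (Ah * (v / u)) - θ₁ * B1h - θ₂ * B2h) /
        ((p₁ + p₂) * D))
    · ring
    · rw [e1, e2, key3]; simp
  · trans ((f1 * B1h + f2 * B2h) / ((p₁ + p₂) * D))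
    · field_simp
    · rw [key4]; field_simp
end

section
/- Let σ₁, δ, p₁, p₂ > 0, let α₂ < 0 < α₁ be the roots of φ₁, let θ₁ < θ₂ < 0 be real numbers with φ₁(θ₁) > 0 and φ₁(θ₂) < 0, let b₁ ≤ b₂ be real numbers, set π₁ := p₂/(p₁+p₂), π₂ := p₁/(p₁+p₂) and φ₁ᵢ := φ₁(θᵢ)/p₂. Then the 4×4 linear system A₁ + A₂ = 0; A₁e^{α₁(b₂−b₁)} + A₂e^{α₂(b₂−b₁)} − B₁ − B₂ = π₁; α₁A₁e^{α₁(b₂−b₁)} + α₂A₂e^{α₂(b₂−b₁)} − θ₁B₁ − θ₂B₂ = 0; φ₁₁B₁ + φ₁₂B₂ = π₂ admits exactly one solution (A₁, A₂, B₁, B₂) ∈ ℝ⁴. -/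
/-- The 4×4 linear system of continuity and smooth-pasting conditions determining the
coefficients `(A₁, A₂, B₁, B₂)` of the stationary CDF admits exactly one solution. -/
theorem stationary_system_unique_solution (σ₁ δ p₁ p₂ α₁ α₂ θ₁ θ₂ b₁ b₂ : ℝ)
    (hσ₁ : 0 < σ₁) (hδ : 0 < δ) (hp₁ : 0 < p₁) (hp₂ : 0 < p₂)
    (hα₂ : α₂ < 0) (hα₁ : 0 < α₁)
    (hrootα₁ : phiQuad σ₁ δ p₁ α₁ = 0) (hrootα₂ : phiQuad σ₁ δ p₁ α₂ = 0)
    (hθord : θ₁ < θ₂) (hθ₂neg : θ₂ < 0)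
    (hφθ₁ : 0 < phiQuad σ₁ δ p₁ θ₁) (hφθ₂ : phiQuad σ₁ δ p₁ θ₂ < 0)
    (hb : b₁ ≤ b₂) :
    ∃! v : ℝ × ℝ × ℝ × ℝ,
      v.1 + v.2.1 = 0 ∧
      v.1 * Real.exp (α₁ * (b₂ - b₁)) + v.2.1 * Real.exp (α₂ * (b₂ - b₁)) -
        v.2.2.1 - v.2.2.2 = p₂ / (p₁ + p₂) ∧
      α₁ * v.1 * Real.exp (α₁ * (b₂ - b₁)) + α₂ * v.2.1 * Real.exp (α₂ * (b₂ - b₁)) -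
        θ₁ * v.2.2.1 - θ₂ * v.2.2.2 = 0 ∧
      (phiQuad σ₁ δ p₁ θ₁ / p₂) * v.2.2.1 + (phiQuad σ₁ δ p₁ θ₂ / p₂) * v.2.2.2 =
        p₁ / (p₁ + p₂) := by
  set E₁ : ℝ := Real.exp (α₁ * (b₂ - b₁)) with hE₁def
  set E₂ : ℝ := Real.exp (α₂ * (b₂ - b₁)) with hE₂def
  set c₁ : ℝ := phiQuad σ₁ δ p₁ θ₁ / p₂ with hc₁def
  set c₂ : ℝ := phiQuad σ₁ δ p₁ θ₂ / p₂ with hc₂def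
  set P₁ : ℝ := p₂ / (p₁ + p₂) with hP₁def
  set P₂ : ℝ := p₁ / (p₁ + p₂) with hP₂def
  have hθ₁neg : θ₁ < 0 := hθord.trans hθ₂neg
  have hE₁one : 1 ≤ E₁ := Real.one_le_exp (mul_nonneg hα₁.le (by linarith))
  have hE₂pos : 0 < E₂ := Real.exp_pos _
  have hE₂one : E₂ ≤ 1 := Real.exp_le_one_iff.mpr
    (mul_nonpos_of_nonpos_of_nonneg hα₂.le (by linarith))
  have hc₁pos : 0 < c₁ := div_pos hφθ₁ hp₂
  have hc₂neg : c₂ < 0 := div_neg_of_neg_of_pos hφθ₂ hp₂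
  set F : ℝ := α₁ * E₁ - α₂ * E₂ with hFdef
  set G : ℝ := E₁ - E₂ with hGdef
  have hFpos : 0 < F := by
    have h1 : 0 < α₁ * E₁ := by positivity
    have h2 : 0 < -α₂ * E₂ := by
      have : 0 < -α₂ := by linarith
      positivity
    rw [hFdef]; nlinarith
  have hGnonneg : 0 ≤ G := by rw [hGdef]; linarith
  set D : ℝ := G * (θ₂ * c₁ - θ₁ * c₂) - F * (c₁ - c₂) with hDdef
  have hDneg : D < 0 := by
    have h1 : θ₂ * c₁ - θ₁ * c₂ < 0 := by nlinarith
    have h2 : 0 < c₁ - c₂ := by linarith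
    have h3 : G * (θ₂ * c₁ - θ₁ * c₂) ≤ 0 := mul_nonpos_of_nonneg_of_nonpos hGnonneg h1.le
    rw [hDdef]; nlinarith
  have hD : D ≠ 0 := hDneg.ne
  set A₁ : ℝ := (P₁ * (θ₂ * c₁ - θ₁ * c₂) + P₂ * (θ₂ - θ₁)) / D with hA₁def
  set B₁ : ℝ := (-(P₁ * F * c₂) + P₂ * (θ₂ * G - F)) / D with hB₁def
  set B₂ : ℝ := (P₁ * F * c₁ + P₂ * (F - θ₁ * G)) / D with hB₂def
  have hEx2 : A₁ * E₁ + (-A₁) * E₂ - B₁ - B₂ = P₁ := by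
    rw [hA₁def, hB₁def, hB₂def]
    field_simp
    rw [hDdef, hFdef, hGdef]
    ring
  have hEx3 : α₁ * A₁ * E₁ + α₂ * (-A₁) * E₂ - θ₁ * B₁ - θ₂ * B₂ = 0 := by
    rw [hA₁def, hB₁def, hB₂def]
    field_simp
    rw [hFdef, hGdef]
    ring
  have hEx4 : c₁ * B₁ + c₂ * B₂ = P₂ := by
    rw [hB₁def, hB₂def]
    field_simp
    rw [hDdef, hFdef, hGdef]
    ring
  refine ⟨(A₁, -A₁, B₁, B₂), ⟨by ring, hEx2, hEx3, hEx4⟩, ?_⟩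
  rintro ⟨w₁, w₂, w₃, w₄⟩ ⟨h1, h2, h3, h4⟩
  simp only at h1 h2 h3 h4 ⊢
  have hw₂ : w₂ = -w₁ := by linarith
  subst hw₂
  have key1 : D * (w₁ - A₁) = 0 := by
    rw [hDdef, hFdef, hGdef]
    linear_combination (θ₂ * c₁ - θ₁ * c₂) * (h2 - hEx2) + (c₂ - c₁) * (h3 - hEx3) +
      (θ₂ - θ₁) * (h4 - hEx4)
  have hw₁ : w₁ = A₁ := sub_eq_zero.mp ((mul_eq_zero.mp key1).resolve_left hD)
  subst hw₁
  have key3 : (c₁ - c₂) * (w₃ - B₁) = 0 := by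
    linear_combination (h4 - hEx4) + c₂ * (h2 - hEx2)
  have hc₁c₂ : c₁ - c₂ ≠ 0 := ne_of_gt (by linarith)
  have hw₃ : w₃ = B₁ := sub_eq_zero.mp ((mul_eq_zero.mp key3).resolve_left hc₁c₂)
  subst hw₃
  have hw₄ : w₄ = B₂ := by linarith
  subst hw₄
  rfl
end

section
/- Let σ₁, σ₂, δ, p₁, p₂ > 0, let α₂ < 0 < α₁ be the roots of φ₁, let θ₁ < θ₂ < 0 be the two strictly negative roots of φ̄ = φ₁φ₂ − p₁p₂, let b₁ ≤ b₂, set π₁ := p₂/(p₁+p₂), π₂ := p₁/(p₁+p₂), φ₁ᵢ := φ₁(θᵢ)/p₂, and let (A₁, A₂, B₁, B₂) be the unique solution of the linear system A₁ + A₂ = 0; A₁e^{α₁(b₂−b₁)} + A₂e^{α₂(b₂−b₁)} − B₁ − B₂ = π₁; α₁A₁e^{α₁(b₂−b₁)} + α₂A₂e^{α₂(b₂−b₁)} − θ₁B₁ − θ₂B₂ = 0; φ₁₁B₁ + φ₁₂B₂ = π₂. Define Π(·,1) and Π(·,2) piecewise as: Π(z,1) = 0 for z ≤ b₁, Π(z,1)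 = A₁e^{α₁(z−b₁)} + A₂e^{α₂(z−b₁)} for b₁ < z < b₂, Π(z,1) = B₁e^{θ₁(z−b₂)} + B₂e^{θ₂(z−b₂)} + π₁ for z ≥ b₂; and Π(z,2) = 0 for z ≤ b₂, Π(z,2) = −B₁φ₁₁e^{θ₁(z−b₂)} − B₂φ₁₂e^{θ₂(z−b₂)} + π₂ for z > b₂. Then both functions z ↦ Π(z,1) and z ↦ Π(z,2) are nondecreasing on ℝ. -/
set_option maxHeartbeats 1000000


lemma quad_factor (a b p x y : ℝ) (hxy : x ≠ y)
    (hx : a*x^2 + b*x - p = 0) (hy : a*y^2 + b*y - p = 0) (t : ℝ) :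
    a*t^2 + b*t - p = a*(t-x)*(t-y) := by
  have h1 : (x - y) * (a*(x+y) + b) = 0 := by linear_combination hx - hy
  have h2 : a*(x+y) + b = 0 := by
    rcases mul_eq_zero.1 h1 with h|h
    · exact absurd (sub_eq_zero.1 h) hxy
    · exact h
  have h3 : p = -(a*x*y) := by linear_combination -(1:ℝ)*hx + x*h2
  linear_combination t*h2 - h3

lemma sign_pos_of_neg_neg (X A R : ℝ) (hX : X < 0) (hXA : X*A = R) (hR : R < 0) : 0 < A := by
  by_contra hcon
  push_neg at hcon
  nlinarith [mul_nonneg (neg_nonneg.2 hX.le) (neg_nonneg.2 hcon)]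

lemma sign_neg_of_neg_pos (X B R : ℝ) (hX : X < 0) (hXB : X*B = R) (hR : 0 < R) : B < 0 := by
  by_contra hcon
  push_neg at hcon
  nlinarith [mul_nonpos_of_nonpos_of_nonneg hX.le hcon]

lemma sign_nonneg_of_neg_nonpos (X W R : ℝ) (hX : X < 0) (hXW : X*W = R) (hR : R ≤ 0) : 0 ≤ W := by
  by_contra hcon
  push_neg at hcon
  nlinarith [mul_pos (neg_pos.2 hX) (neg_pos.2 hcon)]

lemma neg_of_pos_mul_eq_neg (b P n : ℝ) (hb : 0 < b) (h : b*P = n) (hn : n < 0) : P < 0 := by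
  by_contra hcon
  push_neg at hcon
  nlinarith [mul_nonneg hb.le hcon]

lemma between_of_mul_neg (x u v : ℝ) (huv : u < v) (h : (x-u)*(x-v) < 0) : u < x ∧ x < v := by
  constructor
  · by_contra hcon; push_neg at hcon; nlinarith
  · by_contra hcon; push_neg at hcon; nlinarith

lemma Ksign (w1 w2 x y : ℝ) (hw1 : 0 < w1) (hw2 : w2 < 0) (hx : x < 0) (hy : 0 < y) :
    w1*x + w2*y < 0 := by
  nlinarith [mul_neg_of_pos_of_neg hw1 hx, mul_neg_of_neg_of_pos hw2 hy]


lemma quartic_factor (a1 a2 b1 b2 p1 p2 θ₁ θ₂ : ℝ)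
    (ha1 : a1 ≠ 0) (ha2 : a2 ≠ 0) (hθ1 : θ₁ ≠ 0) (hθ2 : θ₂ ≠ 0) (hne : θ₁ ≠ θ₂)
    (h1 : (a1*θ₁^2 + b1*θ₁ - p1) * (a2*θ₁^2 + b2*θ₁ - p2) - p1*p2 = 0)
    (h2 : (a1*θ₂^2 + b1*θ₂ - p1) * (a2*θ₂^2 + b2*θ₂ - p2) - p1*p2 = 0) :
    ∃ ρ : ℝ, a1*a2*ρ = -(a1*b2+a2*b1) - a1*a2*(θ₁+θ₂) ∧
      ∀ t, (a1*t^2 + b1*t - p1) * (a2*t^2 + b2*t - p2) - p1*p2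
        = a1*a2*t*(t-θ₁)*(t-θ₂)*(t-ρ) := by
  obtain ⟨ρ, hρ⟩ : ∃ ρ : ℝ, a1*a2*ρ = -(a1*b2+a2*b1) - a1*a2*(θ₁+θ₂) :=
    ⟨(-(a1*b2+a2*b1) - a1*a2*(θ₁+θ₂))/(a1*a2), by field_simp⟩
  refine ⟨ρ, hρ, ?_⟩
  set C₁ : ℝ := (b1*b2 - a1*p2 - a2*p1) - a1*a2*(θ₁*θ₂ + (θ₁+θ₂)*ρ) with hC1
  set C₀ : ℝ := -(b1*p2 + b2*p1) + a1*a2*(θ₁*θ₂)*ρ with hC0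
  have hfac0 : ∀ t, (a1*t^2 + b1*t - p1) * (a2*t^2 + b2*t - p2) - p1*p2
      = a1*a2*t*(t-θ₁)*(t-θ₂)*(t-ρ) + t*(C₁*t + C₀) := by
    intro t
    rw [hC1, hC0]
    linear_combination (t^3)*hρ
  have e1 : C₁*θ₁ + C₀ = 0 := by
    have h := hfac0 θ₁
    rw [h1] at h
    have h' : θ₁*(C₁*θ₁ + C₀) = 0 := by linear_combination -h
    exact (mul_eq_zero.1 h').resolve_left hθ1
  have e2 : C₁*θ₂ + C₀ = 0 := by
    have h := hfac0 θ₂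
    rw [h2] at h
    have h' : θ₂*(C₁*θ₂ + C₀) = 0 := by linear_combination -h
    exact (mul_eq_zero.1 h').resolve_left hθ2
  have hC₁0 : C₁ = 0 := by
    have h' : (θ₁ - θ₂)*C₁ = 0 := by linear_combination e1 - e2
    exact (mul_eq_zero.1 h').resolve_left (sub_ne_zero.2 hne)
  have hC₀0 : C₀ = 0 := by linear_combination e1 - θ₁*hC₁0
  intro t
  have := hfac0 t
  rw [hC₁0, hC₀0] at this
  linarith [this]

lemma key_signs (a1 a2 dl p1 p2 α₁ α₂ t1 t2 c dd A1 B1 B2 : ℝ)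
    (ha1 : 0 < a1) (ha2 : 0 < a2) (hdl : 0 < dl) (hp1 : 0 < p1) (hp2 : 0 < p2)
    (hα₂ : α₂ < 0) (hα₁ : 0 < α₁)
    (hr1 : a1*α₁^2 + (dl+a1)*α₁ - p1 = 0)
    (hr2 : a1*α₂^2 + (dl+a1)*α₂ - p1 = 0)
    (hθ : t1 < t2) (hθ2 : t2 < 0)
    (hq1 : (a1*t1^2 + (dl+a1)*t1 - p1) * (a2*t1^2 + (dl+a2)*t1 - p2) - p1*p2 = 0)
    (hq2 : (a1*t2^2 + (dl+a1)*t2 - p1) * (a2*t2^2 + (dl+a2)*t2 - p2) - p1*p2 = 0)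
    (hc : 0 ≤ c) (hdd : 0 < dd)
    (hS2 : (p1+p2)*(c*A1 - B1 - B2) = p2)
    (hS3 : dd*A1 - t1*B1 - t2*B2 = 0)
    (hS4 : (p1+p2)*((a1*t1^2+(dl+a1)*t1-p1)*B1 + (a1*t2^2+(dl+a1)*t2-p1)*B2) = p1*p2) :
    0 < (a1*t1^2+(dl+a1)*t1-p1) ∧ (a1*t2^2+(dl+a1)*t2-p1) < 0 ∧ 0 ≤ A1 ∧ B2 ≤ 0 ∧ 0 ≤ t1*B1 + t2*B2 ∧
      0 ≤ -((a1*t1^2+(dl+a1)*t1-p1)*t1*B1) - (a1*t2^2+(dl+a1)*t2-p1)*t2*B2 := by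
  have ht1neg : t1 < 0 := lt_trans hθ hθ2
  have ht10 : t1 ≠ 0 := ne_of_lt ht1neg
  have ht20 : t2 ≠ 0 := ne_of_lt hθ2
  have htne : t1 ≠ t2 := ne_of_lt hθ
  have htne' : t2 - t1 ≠ 0 := sub_ne_zero.2 (ne_of_gt hθ)
  have ht1t2 : 0 < t1*t2 := mul_pos_of_neg_of_neg ht1neg hθ2
  have hαne : α₁ ≠ α₂ := by intro h; rw [h] at hα₁; linarith
  have hτ : 0 < p1 + p2 := by linarith
  have hpp : 0 < p1*p2 := mul_pos hp1 hp2
  have hφ1 : ∀ t, a1*t^2 + (dl+a1)*t - p1 = a1*(t-α₁)*(t-α₂) :=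
    quad_factor a1 (dl+a1) p1 α₁ α₂ hαne hr1 hr2
  obtain ⟨ρ, hρ, hfac⟩ := quartic_factor a1 a2 (dl+a1) (dl+a2) p1 p2 t1 t2
    (ne_of_gt ha1) (ne_of_gt ha2) ht10 ht20 htne hq1 hq2
  have hρα : α₁ < ρ := by
    have h := hfac α₁
    rw [hr1] at h
    have h' : (a1*a2*α₁*(α₁-t1)*(α₁-t2))*(α₁-ρ) = -(p1*p2) := by linear_combination -h
    have hbase : 0 < a1*a2*α₁*(α₁-t1)*(α₁-t2) :=
      mul_pos (mul_pos (mul_pos (mul_pos ha1 ha2) hα₁)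
        (show (0:ℝ) < α₁ - t1 by linarith)) (show (0:ℝ) < α₁ - t2 by linarith)
    have := neg_of_pos_mul_eq_neg _ _ _ hbase h' (by linarith)
    linarith
  have hfactneg : (α₂-t1) * (α₂-t2) < 0 := by
    have h := hfac α₂
    rw [hr2] at h
    have h' : (a1*a2*(α₂*(α₂-ρ)))*((α₂-t1)*(α₂-t2)) = -(p1*p2) := by linear_combination -h
    have hbase : 0 < a1*a2*(α₂*(α₂-ρ)) :=
      mul_pos (mul_pos ha1 ha2) (mul_pos_of_neg_of_neg hα₂ (show α₂ - ρ < 0 by linarith))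
    exact neg_of_pos_mul_eq_neg _ _ _ hbase h' (by linarith)
  obtain ⟨h1α, hα2t⟩ := between_of_mul_neg α₂ t1 t2 hθ hfactneg
  have hw1 : 0 < (a1*t1^2+(dl+a1)*t1-p1) := by
    rw [hφ1 t1]
    exact mul_pos_of_neg_of_neg (mul_neg_of_pos_of_neg ha1 (by linarith)) (by linarith)
  have hw2 : (a1*t2^2+(dl+a1)*t2-p1) < 0 := by
    rw [hφ1 t2]
    exact mul_neg_of_neg_of_pos (mul_neg_of_pos_of_neg ha1 (by linarith)) (by linarith)
  have hσ : a1*(α₁+α₂) + (dl+a1) = 0 := by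
    have h1 : (α₁ - α₂) * (a1*(α₁+α₂) + (dl+a1)) = 0 := by linear_combination hr1 - hr2
    exact (mul_eq_zero.1 h1).resolve_left (sub_ne_zero.2 hαne)
  have hσneg : α₁ + α₂ < 0 := by
    by_contra hcon; push_neg at hcon
    have := mul_nonneg ha1.le hcon
    linarith
  have hσ0 : (α₁+α₂) ≠ 0 := ne_of_lt hσneg
  have hφσ : a1*(α₁+α₂)^2 + (dl+a1)*(α₁+α₂) - p1 = -p1 := by linear_combination (α₁+α₂)*hσ
  have hE : a1*a2*((α₁+α₂)-t1)*((α₁+α₂)-t2)*((α₁+α₂)-ρ) = -(p1*(a2*(α₁+α₂)+(dl+a2))) := by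
    have h := hfac (α₁+α₂)
    rw [hφσ] at h
    have h2 : (α₁+α₂) * (a1*a2*((α₁+α₂)-t1)*((α₁+α₂)-t2)*((α₁+α₂)-ρ) - (-(p1*(a2*(α₁+α₂)+(dl+a2))))) = 0 := by
      linear_combination -h
    have h3 := (mul_eq_zero.1 h2).resolve_left hσ0
    linarith [h3]
  have hQ' : ((a1*t1+(dl+a1))*(a1*t2+(dl+a1))+a1*p1) = a1^2*(t1-(α₁+α₂))*(t2-(α₁+α₂)) + a1*p1 := by
    linear_combination (a1*t1 + a1*t2 + (dl+a1) - a1*(α₁+α₂))*hσ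
  have hQσ : ((a1*t1+(dl+a1))*(a1*t2+(dl+a1))+a1*p1) * (a2*(ρ-(α₁+α₂))) = (a1*p1)*((dl+a2)+a2*ρ) := by
    linear_combination (a2*(ρ-(α₁+α₂)))*hQ' - a1*hE
  have hQpos : 0 < ((a1*t1+(dl+a1))*(a1*t2+(dl+a1))+a1*p1) := by
    have hden : 0 < a2*(ρ-(α₁+α₂)) := mul_pos ha2 (by linarith)
    have hρpos : 0 < a2*ρ := mul_pos ha2 (by linarith)
    have hnum : 0 < (a1*p1)*((dl+a2)+a2*ρ) := mul_pos (mul_pos ha1 hp1) (by linarith)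
    rcases lt_trichotomy (((a1*t1+(dl+a1))*(a1*t2+(dl+a1))+a1*p1)) 0 with hlt|heq|hgt
    · exfalso
      have := mul_neg_of_neg_of_pos hlt hden
      linarith
    · exfalso; rw [heq, zero_mul] at hQσ; linarith
    · exact hgt
  have hct2 : t2*c ≤ 0 := mul_nonpos_of_nonpos_of_nonneg (le_of_lt hθ2) hc
  have hct1 : t1*c ≤ 0 := mul_nonpos_of_nonpos_of_nonneg (le_of_lt ht1neg) hc
  have hKneg : ((a1*t1^2+(dl+a1)*t1-p1)*(t2*c-dd)+(a1*t2^2+(dl+a1)*t2-p1)*(dd-t1*c)) < 0 :=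
    Ksign _ _ _ _ hw1 hw2 (by linarith) (by linarith)
  have hTK : (p1+p2)*((a1*t1^2+(dl+a1)*t1-p1)*(t2*c-dd)+(a1*t2^2+(dl+a1)*t2-p1)*(dd-t1*c)) < 0 := mul_neg_of_pos_of_neg hτ hKneg
  have hB1lin : (p1+p2)*(t2-t1)*B1 = t2*((p1+p2)*c*A1 - p2) - (p1+p2)*dd*A1 := by
    linear_combination (-t2)*hS2 + (p1+p2)*hS3
  have hB2lin : (p1+p2)*(t2-t1)*B2 = (p1+p2)*dd*A1 - t1*((p1+p2)*c*A1 - p2) := by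
    linear_combination t1*hS2 - (p1+p2)*hS3
  have hKA : (p1+p2)*((a1*t1^2+(dl+a1)*t1-p1)*(t2*c-dd)+(a1*t2^2+(dl+a1)*t2-p1)*(dd-t1*c))*A1 = -((t2-t1)*(a1*((t1*t2)*p2))) := by
    linear_combination -((a1*t1^2+(dl+a1)*t1-p1)*hB1lin) - (a1*t2^2+(dl+a1)*t2-p1)*hB2lin + (t2-t1)*hS4
  have hA1 : 0 < A1 := by
    refine sign_pos_of_neg_neg _ _ _ hTK hKA ?_
    have : 0 < (t2-t1)*(a1*((t1*t2)*p2)) :=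
      mul_pos (by linarith) (mul_pos ha1 (mul_pos ht1t2 hp2))
    linarith
  have hB2full : (t2-t1)*((p1+p2)*((a1*t1^2+(dl+a1)*t1-p1)*(t2*c-dd)+(a1*t2^2+(dl+a1)*t2-p1)*(dd-t1*c))*B2) = (t2-t1)*(p2*(dd*(p1+(a1*t1^2+(dl+a1)*t1-p1)) - c*t1*p1)) := by
    linear_combination ((a1*t1^2+(dl+a1)*t1-p1)*(t2*c-dd)+(a1*t2^2+(dl+a1)*t2-p1)*(dd-t1*c))*hB2lin + (dd - t1*c)*hKA
  have hB2K : (p1+p2)*((a1*t1^2+(dl+a1)*t1-p1)*(t2*c-dd)+(a1*t2^2+(dl+a1)*t2-p1)*(dd-t1*c))*B2 = p2*(dd*(p1+(a1*t1^2+(dl+a1)*t1-p1)) - c*t1*p1) := mul_left_cancel₀ htne' hB2full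
  have hB2neg : B2 < 0 := by
    refine sign_neg_of_neg_pos _ _ _ hTK hB2K ?_
    have h1 : c*t1 ≤ 0 := mul_nonpos_of_nonneg_of_nonpos hc ht1neg.le
    have h2 : c*t1*p1 ≤ 0 := mul_nonpos_of_nonpos_of_nonneg h1 hp1.le
    have h3 : 0 < dd*(p1+(a1*t1^2+(dl+a1)*t1-p1)) := mul_pos hdd (by linarith)
    exact mul_pos hp2 (by linarith)
  have hu0 : 0 ≤ t1*B1 + t2*B2 := by
    have := mul_pos hdd hA1
    linarith
  have hWlin : (p1+p2)*(-((a1*t1^2+(dl+a1)*t1-p1)*t1*B1) - (a1*t2^2+(dl+a1)*t2-p1)*t2*B2)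
      = -(t1*(p1*p2)) - (p1+p2)*(t2-t1)*(a1*t2^2+(dl+a1)*t2-p1)*B2 := by
    linear_combination (-t1)*hS4
  have hWK : (p1+p2)*((a1*t1^2+(dl+a1)*t1-p1)*(t2*c-dd)+(a1*t2^2+(dl+a1)*t2-p1)*(dd-t1*c))*(-((a1*t1^2+(dl+a1)*t1-p1)*t1*B1) - (a1*t2^2+(dl+a1)*t2-p1)*t2*B2)
      = -(p2*((c*(t1*t2))*(p1*((a1*t1^2+(dl+a1)*t1-p1)-(a1*t2^2+(dl+a1)*t2-p1))) + (dd*(t1*t2))*((t2-t1)*((a1*t1+(dl+a1))*(a1*t2+(dl+a1))+a1*p1)))) := by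
    linear_combination ((a1*t1^2+(dl+a1)*t1-p1)*(t2*c-dd)+(a1*t2^2+(dl+a1)*t2-p1)*(dd-t1*c))*hWlin - (t2-t1)*(a1*t2^2+(dl+a1)*t2-p1)*hB2K
  have hW : 0 ≤ -((a1*t1^2+(dl+a1)*t1-p1)*t1*B1) - (a1*t2^2+(dl+a1)*t2-p1)*t2*B2 := by
    refine sign_nonneg_of_neg_nonpos _ _ _ hTK hWK ?_
    have h1 : 0 ≤ (c*(t1*t2))*(p1*((a1*t1^2+(dl+a1)*t1-p1)-(a1*t2^2+(dl+a1)*t2-p1))) :=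
      mul_nonneg (mul_nonneg hc ht1t2.le) (mul_nonneg hp1.le (by linarith))
    have h2 : 0 ≤ (dd*(t1*t2))*((t2-t1)*((a1*t1+(dl+a1))*(a1*t2+(dl+a1))+a1*p1)) :=
      mul_nonneg (mul_nonneg hdd.le ht1t2.le) (mul_nonneg (by linarith) hQpos.le)
    have h3 : 0 ≤ p2*((c*(t1*t2))*(p1*((a1*t1^2+(dl+a1)*t1-p1)-(a1*t2^2+(dl+a1)*t2-p1))) + (dd*(t1*t2))*((t2-t1)*((a1*t1+(dl+a1))*(a1*t2+(dl+a1))+a1*p1))) :=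
      mul_nonneg hp2.le (by linarith)
    linarith
  exact ⟨hw1, hw2, le_of_lt hA1, le_of_lt hB2neg, hu0, hW⟩

lemma exp_comb_nonneg (t1 t2 C1 C2 x : ℝ) (h12 : t1 < t2) (h2 : t2 < 0)
    (hC2 : C2 ≤ 0) (h0 : 0 ≤ t1*C1 + t2*C2) (hx : 0 ≤ x) :
    0 ≤ t1*C1*Real.exp (t1*x) + t2*C2*Real.exp (t2*x) := by
  have hex : Real.exp (t1*x) ≤ Real.exp (t2*x) := by
    apply Real.exp_le_exp.2
    nlinarith
  have h2B : 0 ≤ t2*C2 := by nlinarith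
  rcases le_or_gt 0 (t1*C1) with h|h
  · have e1 := (Real.exp_pos (t1*x)).le
    have e2 := (Real.exp_pos (t2*x)).le
    have := mul_nonneg h e1
    have := mul_nonneg h2B e2
    linarith
  · have key : t1*C1*Real.exp (t2*x) ≤ t1*C1*Real.exp (t1*x) :=
      mul_le_mul_of_nonpos_left hex h.le
    have hsum : 0 ≤ (t1*C1 + t2*C2) * Real.exp (t2*x) :=
      mul_nonneg h0 (Real.exp_pos _).le
    nlinarith [key, hsum]

lemma monotoneOn_exp_comb (t1 t2 C1 C2 K b : ℝ) (h12 : t1 < t2) (h2 : t2 < 0)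
    (hC2 : C2 ≤ 0) (h0 : 0 ≤ t1*C1 + t2*C2) :
    MonotoneOn (fun z => C1*Real.exp (t1*(z-b)) + C2*Real.exp (t2*(z-b)) + K)
      (Set.Ici b) := by
  have hd : ∀ x : ℝ, HasDerivAt (fun z => C1*Real.exp (t1*(z-b)) + C2*Real.exp (t2*(z-b)) + K)
      (t1*C1*Real.exp (t1*(x-b)) + t2*C2*Real.exp (t2*(x-b))) x := by
    intro x
    have h1 : HasDerivAt (fun z : ℝ => t1*(z-b)) t1 x := by
      simpa using ((hasDerivAt_id x).sub_const b).const_mul t1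
    have h1' : HasDerivAt (fun z : ℝ => t2*(z-b)) t2 x := by
      simpa using ((hasDerivAt_id x).sub_const b).const_mul t2
    have hsum := ((h1.exp.const_mul C1).add (h1'.exp.const_mul C2)).add_const K
    refine hsum.congr_deriv ?_
    ring
  apply monotoneOn_of_deriv_nonneg (convex_Ici b)
  · exact (Continuous.continuousOn (by fun_prop))
  · intro x hx
    exact (hd x).differentiableAt.differentiableWithinAt
  · intro x hx
    rw [(hd x).deriv]
    rw [interior_Ici] at hx
    exact exp_comb_nonneg t1 t2 C1 C2 (x-b) h12 h2 hC2 h0 (by simp at hx; linarith)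

/-- Both components of the piecewise-defined candidate stationary CDF
`(Π(·,1), Π(·,2))` (here `Pi1, Pi2`), built from the solution `(A₁, A₂, B₁, B₂)` of the
continuity/smooth-pasting linear system, are nondecreasing on `ℝ`. -/
theorem stationary_CDF_monotone (σ₁ σ₂ δ p₁ p₂ α₁ α₂ θ₁ θ₂ b₁ b₂ A₁ A₂ B₁ B₂ : ℝ)
    (Pi1 Pi2 : ℝ → ℝ)
    (hσ₁ : 0 < σ₁) (hσ₂ : 0 < σ₂) (hδ : 0 < δ) (hp₁ : 0 < p₁) (hp₂ : 0 < p₂)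
    (hα₂ : α₂ < 0) (hα₁ : 0 < α₁)
    (hrootα₁ : phiQuad σ₁ δ p₁ α₁ = 0) (hrootα₂ : phiQuad σ₁ δ p₁ α₂ = 0)
    (hθord : θ₁ < θ₂) (hθ₂neg : θ₂ < 0)
    (hrootθ₁ : phiBar σ₁ σ₂ δ p₁ p₂ θ₁ = 0) (hrootθ₂ : phiBar σ₁ σ₂ δ p₁ p₂ θ₂ = 0)
    (hb : b₁ ≤ b₂)
    (hsys₁ : A₁ + A₂ = 0)
    (hsys₂ : A₁ * Real.exp (α₁ * (b₂ - b₁)) + A₂ * Real.exp (α₂ * (b₂ - b₁)) - B₁ - B₂ =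
      p₂ / (p₁ + p₂))
    (hsys₃ : α₁ * A₁ * Real.exp (α₁ * (b₂ - b₁)) + α₂ * A₂ * Real.exp (α₂ * (b₂ - b₁)) -
      θ₁ * B₁ - θ₂ * B₂ = 0)
    (hsys₄ : (phiQuad σ₁ δ p₁ θ₁ / p₂) * B₁ + (phiQuad σ₁ δ p₁ θ₂ / p₂) * B₂ =
      p₁ / (p₁ + p₂))
    (hPi1a : ∀ z ≤ b₁, Pi1 z = 0)
    (hPi1b : ∀ z, b₁ < z → z < b₂ →
      Pi1 z = A₁ * Real.exp (α₁ * (z - b₁)) + A₂ * Real.exp (α₂ * (z - b₁)))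
    (hPi1c : ∀ z, b₂ ≤ z →
      Pi1 z = B₁ * Real.exp (θ₁ * (z - b₂)) + B₂ * Real.exp (θ₂ * (z - b₂)) + p₂ / (p₁ + p₂))
    (hPi2a : ∀ z ≤ b₂, Pi2 z = 0)
    (hPi2b : ∀ z, b₂ < z →
      Pi2 z = -B₁ * (phiQuad σ₁ δ p₁ θ₁ / p₂) * Real.exp (θ₁ * (z - b₂)) -
        B₂ * (phiQuad σ₁ δ p₁ θ₂ / p₂) * Real.exp (θ₂ * (z - b₂)) + p₁ / (p₁ + p₂)) :
    Monotone Pi1 ∧ Monotone Pi2 := by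

  simp only [phiQuad] at hrootα₁ hrootα₂ hsys₄ hPi2b
  simp only [phiBar, phiQuad] at hrootθ₁ hrootθ₂
  have hτ : (0:ℝ) < p₁ + p₂ := by linarith
  have hτ0 : p₁ + p₂ ≠ 0 := ne_of_gt hτ
  have hp₂0 : p₂ ≠ 0 := ne_of_gt hp₂
  have hA2 : A₂ = -A₁ := by linarith
  have hL : 0 ≤ b₂ - b₁ := by linarith
  set E₁ : ℝ := Real.exp (α₁ * (b₂ - b₁)) with hE₁def
  set E₂ : ℝ := Real.exp (α₂ * (b₂ - b₁)) with hE₂def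
  have hc : 0 ≤ E₁ - E₂ := by
    rw [hE₁def, hE₂def]
    have : α₂ * (b₂ - b₁) ≤ α₁ * (b₂ - b₁) :=
      mul_le_mul_of_nonneg_right (by linarith) hL
    have := Real.exp_le_exp.2 this
    linarith
  have hdd : 0 < α₁ * E₁ - α₂ * E₂ := by
    have h1 : 0 < α₁ * E₁ := mul_pos hα₁ (Real.exp_pos _)
    have h2 : α₂ * E₂ < 0 := mul_neg_of_neg_of_pos hα₂ (Real.exp_pos _)
    linarith
  rw [hA2] at hsys₂ hsys₃
  have hS2 : (p₁+p₂)*((E₁ - E₂)*A₁ - B₁ - B₂) = p₂ := by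
    rw [eq_div_iff hτ0] at hsys₂
    linear_combination hsys₂
  have hS3 : (α₁*E₁ - α₂*E₂)*A₁ - θ₁*B₁ - θ₂*B₂ = 0 := by
    linear_combination hsys₃
  have hS4 : (p₁+p₂)*((1/2*σ₁^2*θ₁^2+(δ+1/2*σ₁^2)*θ₁-p₁)*B₁ + (1/2*σ₁^2*θ₂^2+(δ+1/2*σ₁^2)*θ₂-p₁)*B₂) = p₁*p₂ := by
    have h := hsys₄
    field_simp at h
    linear_combination h/2
  obtain ⟨hw1, hw2, hA1, hB2, hu0, hW⟩ :=
    key_signs (1/2*σ₁^2) (1/2*σ₂^2) δ p₁ p₂ α₁ α₂ θ₁ θ₂ (E₁ - E₂) (α₁*E₁ - α₂*E₂) A₁ B₁ B₂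
      (by positivity) (by positivity) hδ hp₁ hp₂ hα₂ hα₁
      (by linear_combination hrootα₁) (by linear_combination hrootα₂)
      hθord hθ₂neg (by linear_combination hrootθ₁) (by linear_combination hrootθ₂)
      hc hdd hS2 hS3 hS4
  -- first component
  have hF1mono : MonotoneOn
      (fun z => B₁*Real.exp (θ₁*(z-b₂)) + B₂*Real.exp (θ₂*(z-b₂)) + p₂/(p₁+p₂))
      (Set.Ici b₂) :=
    monotoneOn_exp_comb θ₁ θ₂ B₁ B₂ (p₂/(p₁+p₂)) b₂ hθord hθ₂neg hB2 hu0
  have hPi1c' : ∀ z, b₂ ≤ z →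
      Pi1 z = B₁*Real.exp (θ₁*(z-b₂)) + B₂*Real.exp (θ₂*(z-b₂)) + p₂/(p₁+p₂) := by
    intro z hz
    rw [hPi1c z hz]
  have hmid : ∀ z, b₁ < z → z < b₂ →
      Pi1 z = A₁*(Real.exp (α₁*(z-b₁)) - Real.exp (α₂*(z-b₁))) := by
    intro z h1 h2
    rw [hPi1b z h1 h2, hA2]
    ring
  have midmono : ∀ s t : ℝ, b₁ ≤ s → s ≤ t →
      A₁*(Real.exp (α₁*(s-b₁)) - Real.exp (α₂*(s-b₁))) ≤
      A₁*(Real.exp (α₁*(t-b₁)) - Real.exp (α₂*(t-b₁))) := by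
    intro s t hs hst
    apply mul_le_mul_of_nonneg_left _ hA1
    have h1 : Real.exp (α₁*(s-b₁)) ≤ Real.exp (α₁*(t-b₁)) :=
      Real.exp_le_exp.2 (mul_le_mul_of_nonneg_left (by linarith) hα₁.le)
    have h2 : Real.exp (α₂*(t-b₁)) ≤ Real.exp (α₂*(s-b₁)) :=
      Real.exp_le_exp.2 (by nlinarith)
    linarith
  have midnonneg : ∀ z, b₁ ≤ z →
      0 ≤ A₁*(Real.exp (α₁*(z-b₁)) - Real.exp (α₂*(z-b₁))) := by
    intro z hz
    have h := midmono b₁ z (le_refl b₁) hz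
    simpa using h
  have hjunc : A₁*(Real.exp (α₁*(b₂-b₁)) - Real.exp (α₂*(b₂-b₁))) =
      B₁*Real.exp (θ₁*(b₂-b₂)) + B₂*Real.exp (θ₂*(b₂-b₂)) + p₂/(p₁+p₂) := by
    rw [← hE₁def, ← hE₂def]
    have hdiv : (E₁ - E₂)*A₁ - B₁ - B₂ = p₂/(p₁+p₂) := by
      rw [eq_div_iff hτ0]
      linear_combination hS2
    simp only [sub_self, mul_zero, Real.exp_zero, mul_one]
    linarith [hdiv]
  have hMono1 : Monotone Pi1 := by
    intro s t hst
    rcases le_or_gt t b₁ with h | h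
    · rw [hPi1a s (le_trans hst h), hPi1a t h]
    · rcases lt_or_ge t b₂ with h2 | h2
      · rw [hmid t h h2]
        rcases le_or_gt s b₁ with hs | hs
        · rw [hPi1a s hs]
          exact midnonneg t (le_of_lt h)
        · rw [hmid s hs (lt_of_le_of_lt hst h2)]
          exact midmono s t hs.le hst
      · rw [hPi1c' t h2]
        have hft : B₁*Real.exp (θ₁*(b₂-b₂)) + B₂*Real.exp (θ₂*(b₂-b₂)) + p₂/(p₁+p₂) ≤
            B₁*Real.exp (θ₁*(t-b₂)) + B₂*Real.exp (θ₂*(t-b₂)) + p₂/(p₁+p₂) :=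
          hF1mono (Set.self_mem_Ici) h2 h2
        rcases le_or_gt s b₁ with hs | hs
        · rw [hPi1a s hs]
          have h0 := midnonneg b₂ hb
          linarith [hjunc ▸ h0]
        · rcases lt_or_ge s b₂ with hs2 | hs2
          · rw [hmid s hs hs2]
            have := midmono s b₂ hs.le hs2.le
            linarith [hjunc ▸ this]
          · rw [hPi1c' s hs2]
            exact hF1mono hs2 h2 hst
    -- second component
  have hq2neg : (1/2*σ₁^2*θ₂^2+(δ+1/2*σ₁^2)*θ₂-p₁)/p₂ < 0 := div_neg_of_neg_of_pos hw2 hp₂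
  have hC2 : -B₂*((1/2*σ₁^2*θ₂^2+(δ+1/2*σ₁^2)*θ₂-p₁)/p₂) ≤ 0 :=
    mul_nonpos_of_nonneg_of_nonpos (by linarith) hq2neg.le
  have hh0 : 0 ≤ θ₁*(-B₁*((1/2*σ₁^2*θ₁^2+(δ+1/2*σ₁^2)*θ₁-p₁)/p₂)) + θ₂*(-B₂*((1/2*σ₁^2*θ₂^2+(δ+1/2*σ₁^2)*θ₂-p₁)/p₂)) := by
    have heq : θ₁*(-B₁*((1/2*σ₁^2*θ₁^2+(δ+1/2*σ₁^2)*θ₁-p₁)/p₂)) + θ₂*(-B₂*((1/2*σ₁^2*θ₂^2+(δ+1/2*σ₁^2)*θ₂-p₁)/p₂))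
        = (-((1/2*σ₁^2*θ₁^2+(δ+1/2*σ₁^2)*θ₁-p₁)*θ₁*B₁) - (1/2*σ₁^2*θ₂^2+(δ+1/2*σ₁^2)*θ₂-p₁)*θ₂*B₂)/p₂ := by
      field_simp
      ring
    rw [heq]
    exact div_nonneg hW hp₂.le
  have hF2mono : MonotoneOn
      (fun z => (-B₁*((1/2*σ₁^2*θ₁^2+(δ+1/2*σ₁^2)*θ₁-p₁)/p₂))*Real.exp (θ₁*(z-b₂)) +
        (-B₂*((1/2*σ₁^2*θ₂^2+(δ+1/2*σ₁^2)*θ₂-p₁)/p₂))*Real.exp (θ₂*(z-b₂)) + p₁/(p₁+p₂))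
      (Set.Ici b₂) :=
    monotoneOn_exp_comb θ₁ θ₂ (-B₁*((1/2*σ₁^2*θ₁^2+(δ+1/2*σ₁^2)*θ₁-p₁)/p₂)) (-B₂*((1/2*σ₁^2*θ₂^2+(δ+1/2*σ₁^2)*θ₂-p₁)/p₂)) (p₁/(p₁+p₂)) b₂
      hθord hθ₂neg hC2 hh0
  have hPi2b' : ∀ z, b₂ < z →
      Pi2 z = (-B₁*((1/2*σ₁^2*θ₁^2+(δ+1/2*σ₁^2)*θ₁-p₁)/p₂))*Real.exp (θ₁*(z-b₂)) +
        (-B₂*((1/2*σ₁^2*θ₂^2+(δ+1/2*σ₁^2)*θ₂-p₁)/p₂))*Real.exp (θ₂*(z-b₂)) + p₁/(p₁+p₂) := by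
    intro z hz
    rw [hPi2b z hz]
    ring
  have hF2b₂ : (-B₁*((1/2*σ₁^2*θ₁^2+(δ+1/2*σ₁^2)*θ₁-p₁)/p₂))*Real.exp (θ₁*(b₂-b₂)) +
      (-B₂*((1/2*σ₁^2*θ₂^2+(δ+1/2*σ₁^2)*θ₂-p₁)/p₂))*Real.exp (θ₂*(b₂-b₂)) + p₁/(p₁+p₂) = 0 := by
    simp only [sub_self, mul_zero, Real.exp_zero, mul_one]
    linear_combination -hsys₄
  have hMono2 : Monotone Pi2 := by
    intro s t hst
    rcases le_or_gt t b₂ with h | h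
    · rw [hPi2a s (le_trans hst h), hPi2a t h]
    · rw [hPi2b' t h]
      have hft := hF2mono (Set.self_mem_Ici) (le_of_lt h) (le_of_lt h)
      rcases le_or_gt s b₂ with hs | hs
      · rw [hPi2a s hs]
        simp only at hft
        linarith [hF2b₂ ▸ hft]
      · rw [hPi2b' s hs]
        exact hF2mono hs.le (le_of_lt h) hst
  exact ⟨hMono1, hMono2⟩
end

section
/- Let σ₁, δ, p₁, p₂ > 0, let θ₁ < θ₂ < 0 be real numbers with φ₁(θ₂) < 0, set φ₁ᵢ := φ₁(θᵢ)/p₂, let a₂ > 0, let B₁, B₂ ∈ ℝ with B₂ < 0, and let π₁, π₂ ≥ 0 with π₁ + π₂ = 1. Define, for x ≥ a₂, Π̂(x,1) := B₁(x/a₂)^{θ₁} + B₂(x/a₂)^{θ₂} + π₁ and Π̂(x,2) := −B₁φ₁₁(x/a₂)^{θ₁} − B₂φ₁₂(x/a₂)^{θ₂} + π₂. Then for all x ≥ a₂: 1 − Π̂(x,1) − Π̂(x,2) = −B₁(1 − φ₁₁)(x/a₂)^{θ₁} − B₂(1 − φ₁₂)(x/a₂)^{θ₂}, and lim_{x→+∞}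 (x/a₂)^{−θ₂}(1 − Π̂(x,1) − Π̂(x,2)) = −B₂(1 − φ₁₂) > 0. In particular, the tail 1 − Π̂(x,1) − Π̂(x,2) is asymptotically equivalent to a strictly positive constant times x^{θ₂} as x → +∞. -/
/-- First component of the stationary CDF on `[a₂, ∞)`:
`Π̂(x,1) = B₁(x/a₂)^{θ₁} + B₂(x/a₂)^{θ₂} + π₁`. -/
noncomputable def PiHat1 (B₁ B₂ θ₁ θ₂ a₂ π₁ : ℝ) : ℝ → ℝ :=
  fun x => B₁ * (x / a₂) ^ θ₁ + B₂ * (x / a₂) ^ θ₂ + π₁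

/-- Second component of the stationary CDF on `[a₂, ∞)`:
`Π̂(x,2) = −B₁φ₁₁(x/a₂)^{θ₁} − B₂φ₁₂(x/a₂)^{θ₂} + π₂`. -/
noncomputable def PiHat2 (B₁ B₂ θ₁ θ₂ a₂ π₂ φ₁₁ φ₁₂ : ℝ) : ℝ → ℝ :=
  fun x => -B₁ * φ₁₁ * (x / a₂) ^ θ₁ - B₂ * φ₁₂ * (x / a₂) ^ θ₂ + π₂

/-- Pareto tail of the stationary distribution: on `[a₂, ∞)` the tail
`1 − Π̂(x,1) − Π̂(x,2)` equals `−B₁(1−φ₁₁)(x/a₂)^{θ₁} − B₂(1−φ₁₂)(x/a₂)^{θ₂}`, and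
`(x/a₂)^{−θ₂}(1 − Π̂(x,1) − Π̂(x,2)) → −B₂(1−φ₁₂) > 0` as `x → +∞`; i.e., the tail is
asymptotically a strictly positive constant times `x^{θ₂}`. -/
theorem stationary_tail_pareto (σ₁ δ p₁ p₂ θ₁ θ₂ a₂ B₁ B₂ π₁ π₂ : ℝ)
    (hσ₁ : 0 < σ₁) (hδ : 0 < δ) (hp₁ : 0 < p₁) (hp₂ : 0 < p₂)
    (hθord : θ₁ < θ₂) (hθ₂neg : θ₂ < 0)
    (hφθ₂ : phiQuad σ₁ δ p₁ θ₂ < 0)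
    (ha₂ : 0 < a₂) (hB₂ : B₂ < 0)
    (hπ₁ : 0 ≤ π₁) (hπ₂ : 0 ≤ π₂) (hπ : π₁ + π₂ = 1) :
    (∀ x ≥ a₂,
      1 - PiHat1 B₁ B₂ θ₁ θ₂ a₂ π₁ x -
          PiHat2 B₁ B₂ θ₁ θ₂ a₂ π₂ (phiQuad σ₁ δ p₁ θ₁ / p₂) (phiQuad σ₁ δ p₁ θ₂ / p₂) x =
        -B₁ * (1 - phiQuad σ₁ δ p₁ θ₁ / p₂) * (x / a₂) ^ θ₁ -
          B₂ * (1 - phiQuad σ₁ δ p₁ θ₂ / p₂) * (x / a₂) ^ θ₂) ∧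
    Filter.Tendsto
      (fun x => (x / a₂) ^ (-θ₂) *
        (1 - PiHat1 B₁ B₂ θ₁ θ₂ a₂ π₁ x -
          PiHat2 B₁ B₂ θ₁ θ₂ a₂ π₂ (phiQuad σ₁ δ p₁ θ₁ / p₂) (phiQuad σ₁ δ p₁ θ₂ / p₂) x))
      Filter.atTop (nhds (-B₂ * (1 - phiQuad σ₁ δ p₁ θ₂ / p₂))) ∧
    0 < -B₂ * (1 - phiQuad σ₁ δ p₁ θ₂ / p₂) := by
  have hφ₁₂ : phiQuad σ₁ δ p₁ θ₂ / p₂ < 0 := div_neg_of_neg_of_pos hφθ₂ hp₂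
  have hpos : 0 < -B₂ * (1 - phiQuad σ₁ δ p₁ θ₂ / p₂) := by nlinarith
  have hπ₂' : π₂ = 1 - π₁ := by linarith
  subst hπ₂'
  have hkey : ∀ x : ℝ,
      1 - PiHat1 B₁ B₂ θ₁ θ₂ a₂ π₁ x -
          PiHat2 B₁ B₂ θ₁ θ₂ a₂ (1 - π₁) (phiQuad σ₁ δ p₁ θ₁ / p₂) (phiQuad σ₁ δ p₁ θ₂ / p₂) x =
        -B₁ * (1 - phiQuad σ₁ δ p₁ θ₁ / p₂) * (x / a₂) ^ θ₁ -
          B₂ * (1 - phiQuad σ₁ δ p₁ θ₂ / p₂) * (x / a₂) ^ θ₂ := by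
    intro x; simp only [PiHat1, PiHat2]; ring
  refine ⟨fun x _ => hkey x, ?_, hpos⟩
  have h0 : Filter.Tendsto (fun x : ℝ => (x / a₂) ^ (θ₁ - θ₂)) Filter.atTop (nhds 0) := by
    have h1 : Filter.Tendsto (fun x : ℝ => x / a₂) Filter.atTop Filter.atTop :=
      Filter.tendsto_id.atTop_div_const ha₂
    have h2 : Filter.Tendsto (fun y : ℝ => y ^ (θ₁ - θ₂)) Filter.atTop (nhds 0) := by
      have := tendsto_rpow_neg_atTop (y := θ₂ - θ₁) (by linarith)
      simpa [neg_sub] using this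
    exact h2.comp h1
  have hlim : Filter.Tendsto
      (fun x : ℝ => -B₁ * (1 - phiQuad σ₁ δ p₁ θ₁ / p₂) * (x / a₂) ^ (θ₁ - θ₂) -
        B₂ * (1 - phiQuad σ₁ δ p₁ θ₂ / p₂))
      Filter.atTop (nhds (-B₂ * (1 - phiQuad σ₁ δ p₁ θ₂ / p₂))) := by
    have := (h0.const_mul (-B₁ * (1 - phiQuad σ₁ δ p₁ θ₁ / p₂))).sub_const
      (B₂ * (1 - phiQuad σ₁ δ p₁ θ₂ / p₂))
    simpa [neg_mul] using this
  refine hlim.congr' ?_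
  filter_upwards [Filter.eventually_gt_atTop 0] with x hx
  have hxa : (0:ℝ) < x / a₂ := div_pos hx ha₂
  have e1 : (x / a₂) ^ (θ₁ - θ₂) = (x / a₂) ^ θ₁ * (x / a₂) ^ (-θ₂) := by
    rw [← Real.rpow_add hxa]; ring_nf
  have e2 : (x / a₂) ^ (-θ₂) * (x / a₂) ^ θ₂ = 1 := by
    rw [← Real.rpow_add hxa]; simp
  rw [hkey x]
  linear_combination (-B₁ * (1 - phiQuad σ₁ δ p₁ θ₁ / p₂)) * e1 +
    (B₂ * (1 - phiQuad σ₁ δ p₁ θ₂ / p₂)) * e2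
end
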